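/- arXiv:math/0501216 — 8 statements merged into one kernel-verified Lean document; each statement's English description precedes it below -/
import Mathlib

section
/- Let W_n = a·U_n + b·V_n and Ω = a² + 4b² − b²p². Then for all nonnegative integers m and n, W_n² + W_{n+m}² = V_m·W_n·W_{n+m} + U_m²·Ω. -/
/-- The fundamental quadratic identity:
`Wₙ² + W_{n+m}² = Vₘ·Wₙ·W_{n+m} + Uₘ²·Ω` where `W = a·U + b·V` and
`Ω = a² + 4b² − b²p²`. -/
theorem stmt_1 (p a b : ℝ) (U V W : ℕ → ℝ)
    (hU0 : U 0 = 0) (hU1 : U 1 = 1)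
    (hUrec : ∀ n, U (n + 2) = p * U (n + 1) - U n)
    (hV0 : V 0 = 2) (hV1 : V 1 = p)
    (hVrec : ∀ n, V (n + 2) = p * V (n + 1) - V n)
    (hW : ∀ n, W n = a * U n + b * V n)
    (Ω : ℝ) (hΩ : Ω = a ^ 2 + 4 * b ^ 2 - b ^ 2 * p ^ 2) :
    ∀ m n : ℕ, W n ^ 2 + W (n + m) ^ 2 =
      V m * W n * W (n + m) + U m ^ 2 * Ω := by
  have hWrec : ∀ n, W (n + 2) = p * W (n + 1) - W n := by
    intro n
    rw [hW, hW, hW, hUrec, hVrec]; ring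
  have hΩn : ∀ n, W (n + 1) ^ 2 + W n ^ 2 - p * W n * W (n + 1) = Ω := by
    intro n
    induction n with
    | zero => rw [hW 0, hW 1, hU0, hU1, hV0, hV1, hΩ]; ring
    | succ k ih => rw [hWrec k]; linear_combination ih
  have hU3 : ∀ m, U (m + 1) ^ 2 + U m ^ 2 - p * U m * U (m + 1) = 1 := by
    intro m
    induction m with
    | zero => rw [hU0, hU1]; ring
    | succ k ih => rw [hUrec k]; linear_combination ih
  have hVU : ∀ m, V m = 2 * U (m + 1) - p * U m := by
    intro m
    induction m using Nat.twoStepInduction with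
    | zero => rw [hV0, hU1, hU0]; ring
    | one =>
        rw [hV1, hUrec 0, hU0, hU1]; ring
    | more k ih1 ih2 =>
        rw [hVrec k, ih1, ih2, hUrec (k + 1), hUrec k]; ring
  have hAdd : ∀ m n, W (n + (m + 1)) = U (m + 1) * W (n + 1) - U m * W n := by
    intro m
    induction m using Nat.twoStepInduction with
    | zero => intro n; rw [hU1, hU0]; ring
    | one =>
        intro n
        have : n + 2 = n + 1 + 1 := rfl
        rw [hUrec 0, hU0, hU1, hWrec n]; ring
    | more k ih1 ih2 =>
        intro n
        have e : n + (k + 3) = n + (k + 1) + 2 := by omega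
        rw [e, hWrec (n + (k + 1)),
          show n + (k + 1) + 1 = n + (k + 1 + 1) from rfl,
          ih2 n, ih1 n, hUrec (k + 1), hUrec k]
        ring
  intro m n
  cases m with
  | zero =>
      rw [hU0, hV0, Nat.add_zero]; ring
  | succ k =>
      rw [hAdd k n, hVU (k + 1), hUrec k]
      linear_combination (U (k + 1)) ^ 2 * hΩn n - (W n) ^ 2 * hU3 k
end

section
/- For any alphabet X of variables and any integer k ≥ 1, the power sum p_k(X) = Σ_i x_i^k satisfies Waring's formula: p_k(X) = Σ_λ (−1)^{k − l(λ)} · k·(l(λ)−1)! / (∏_i m_i!) · e_1(X)^{m_1} · e_2(X)^{m_2} · ⋯, where the sum is over all partitions λ = 1^{m_1} 2^{m_2} ⋯ of k, l(λ) = m_1 + m_2 + ⋯ is the number of parts, and e_j(X) denotes the j-th elementary symmetric polynomial. -/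
/-!
Newton's identity `p_k = (-1)^(k+1) k e_k - ∑_{0<i<k} (-1)^i e_i p_{k-i}` determines the power
sums recursively, so it suffices to show that the right-hand side `W_k = ∑_{λ ⊢ k} c(λ) e_λ` of
Waring's formula satisfies the same recursion. Adding the part `i` to the partitions of `k - i`
turns `∑_{0<i<k} (-1)^i e_i W_{k-i}` into a sum over partitions `λ ⊢ k` with a marked part `i < k`,
weighted by `(-1)^i c(λ ∖ i)`. For `λ` with at least two parts these weights, taken over the
distinct parts `i` of `λ`, add up to `-c(λ)`, because `∑_i m_i (k - i) = k (l(λ) - 1)`; the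
one-part partition `(k)` has no admissible marked part and supplies the term `(-1)^(k+1) k e_k`.
-/

open Finset MvPolynomial
open scoped Nat

namespace Multiset

variable {α : Type*} [DecidableEq α]

theorem prod_toFinset_count_eq_of_subset {M : Type*} [CommMonoid M] (s : Multiset α)
    {t : Finset α} (hst : s.toFinset ⊆ t) (f : α → ℕ → M) (hf : ∀ a, f a 0 = 1) :
    ∏ a ∈ s.toFinset, f a (s.count a) = ∏ a ∈ t, f a (s.count a) :=
  prod_subset hst fun a _ ha => by rw [count_eq_zero_of_notMem (mt mem_toFinset.2 ha), hf]

theorem prod_factorial_count_cons (a : α) (s : Multiset α) :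
    ∏ b ∈ (a ::ₘ s).toFinset, ((a ::ₘ s).count b)! =
      (s.count a + 1) * ∏ b ∈ s.toFinset, (s.count b)! := by
  have ha : a ∈ (a ::ₘ s).toFinset := mem_toFinset.2 (mem_cons_self a s)
  rw [prod_toFinset_count_eq_of_subset s (t := (a ::ₘ s).toFinset)
      (toFinset_subset.2 (subset_cons s a)) (fun _ m => m !) fun _ => rfl,
    ← mul_prod_erase _ _ ha, ← mul_prod_erase _ (fun b => (s.count b)!) ha, ← mul_assoc,
    count_cons_self, Nat.factorial_succ]
  congr 1
  exact prod_congr rfl fun b hb => by rw [count_cons_of_ne (ne_of_mem_erase hb)]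

theorem card_le_sum_of_pos {s : Multiset ℕ} (hs : ∀ i ∈ s, 0 < i) : card s ≤ s.sum := by
  simpa using card_nsmul_le_sum (a := 1) hs

end Multiset

/-- The coefficient of `e_λ` in Waring's formula, for `λ` given by its multiset of parts `s`
(so that `s.sum` is the degree `k`). -/
noncomputable def waringCoeff (s : Multiset ℕ) : ℚ :=
  (-1) ^ (s.sum - Multiset.card s) * s.sum * (Multiset.card s - 1)! /
    ∏ i ∈ s.toFinset, (s.count i)!

open Multiset in
theorem neg_one_pow_mul_waringCoeff_erase {s : Multiset ℕ} (hs : ∀ i ∈ s, 0 < i) {i : ℕ}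
    (hi : i ∈ s) :
    (-1 : ℚ) ^ i * waringCoeff (s.erase i) =
      -(-1) ^ (s.sum - card s) * ((card s - 2)! / ∏ j ∈ s.toFinset, (s.count j)!) *
        (s.count i * (s.sum - i)) := by
  have hsum : (s.erase i).sum + i = s.sum := by
    rw [add_comm, ← Multiset.sum_cons, cons_erase hi]
  have hcard : card (s.erase i) = card s - 1 := card_erase_of_mem hi
  have hle : card s - 1 ≤ (s.erase i).sum :=
    hcard ▸ card_le_sum_of_pos fun j hj => hs j (mem_of_mem_erase hj)
  have hsign : (-1 : ℚ) ^ i * (-1) ^ ((s.erase i).sum - (card s - 1)) =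
      -(-1) ^ (s.sum - card s) := by
    have hi0 := hs i hi
    have hL := card_pos_iff_exists_mem.2 ⟨i, hi⟩
    rw [← pow_add, show i + ((s.erase i).sum - (card s - 1)) = s.sum - card s + 1 by omega,
      pow_succ, mul_neg_one]
  have hP : (s.count i * ∏ j ∈ (s.erase i).toFinset, ((s.erase i).count j)! : ℚ) =
      ∏ j ∈ s.toFinset, (s.count j)! := by
    have := prod_factorial_count_cons i (s.erase i)
    rw [← count_cons_self, cons_erase hi] at this
    exact_mod_cast this.symm
  have hc : (s.count i : ℚ) ≠ 0 := by exact_mod_cast (count_pos.2 hi).ne'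
  have hsumQ : ((s.erase i).sum : ℚ) = s.sum - i := by rw [← hsum]; push_cast; ring
  rw [waringCoeff, hcard, hsumQ, ← hP, show card s - 1 - 1 = card s - 2 by omega, ← hsign]
  field_simp

open Multiset in
theorem sum_neg_one_pow_mul_waringCoeff_erase {s : Multiset ℕ} (hs : ∀ i ∈ s, 0 < i)
    (h2 : 2 ≤ card s) :
    ∑ i ∈ s.toFinset, (-1 : ℚ) ^ i * waringCoeff (s.erase i) = -waringCoeff s := by
  have hweights : ∑ i ∈ s.toFinset, (s.count i : ℚ) * (s.sum - i) = s.sum * (card s - 1) := by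
    have hL : ∑ i ∈ s.toFinset, (s.count i : ℚ) = card s := by
      exact_mod_cast toFinset_sum_count_eq s
    have hn : ∑ i ∈ s.toFinset, (s.count i : ℚ) * i = s.sum := by
      simpa [nsmul_eq_mul] using (congrArg (Nat.cast : ℕ → ℚ) (Finset.sum_multiset_count s)).symm
    simp only [mul_sub, sum_sub_distrib, ← sum_mul, hL, hn]
    ring
  have hfact : ((card s - 1)! : ℚ) = (card s - 1) * (card s - 2)! := by
    rw [show card s - 1 = card s - 2 + 1 by omega, Nat.factorial_succ]
    push_cast [Nat.cast_sub h2]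
    ring
  rw [sum_congr rfl fun i hi => neg_one_pow_mul_waringCoeff_erase hs (mem_toFinset.1 hi),
    ← mul_sum, hweights, waringCoeff, hfact]
  ring

namespace Nat.Partition

variable {n : ℕ} {μ : n.Partition}

theorem eq_indiscrete_of_mem_parts (h : n ∈ μ.parts) : μ = indiscrete n := by
  have hrest : (μ.parts.erase n).sum = 0 := by
    have := congrArg Multiset.sum (Multiset.cons_erase h)
    rw [Multiset.sum_cons, μ.parts_sum] at this
    omega
  ext1
  rw [indiscrete_parts (μ.parts_pos h).ne', ← Multiset.cons_erase h,
    Multiset.eq_zero_of_forall_notMem fun i hi =>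
      (μ.parts_pos (Multiset.mem_of_mem_erase hi)).ne'
        (Multiset.sum_eq_zero_iff.1 hrest i hi)]
  rfl

theorem lt_of_mem_parts_of_ne_indiscrete (hμ : μ ≠ indiscrete n) {i : ℕ} (hi : i ∈ μ.parts) :
    i < n :=
  (le_of_mem_parts hi).lt_of_ne fun h => hμ (eq_indiscrete_of_mem_parts (h ▸ hi))

theorem two_le_card_parts_of_ne_indiscrete (hn : n ≠ 0) (hμ : μ ≠ indiscrete n) :
    2 ≤ Multiset.card μ.parts := by
  have hne : μ.parts ≠ 0 := fun h => hn (by rw [← μ.parts_sum, h, Multiset.sum_zero])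
  by_contra! hlt
  have hcard : Multiset.card μ.parts = 1 := by have := Multiset.card_pos.2 hne; omega
  obtain ⟨a, ha⟩ := Multiset.card_eq_one.1 hcard
  have hsum := μ.parts_sum
  rw [ha, Multiset.sum_singleton] at hsum
  exact (lt_of_mem_parts_of_ne_indiscrete hμ (ha ▸ Multiset.mem_singleton_self a)).ne hsum

theorem toFinset_parts_subset_range : μ.parts.toFinset ⊆ range (n + 1) :=
  fun _ hi => mem_range.2 (Nat.lt_succ_of_le (le_of_mem_parts (Multiset.mem_toFinset.1 hi)))

end Nat.Partition

namespace MvPolynomial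

variable (σ : Type*) [Fintype σ]

section

variable {R : Type*} [CommSemiring R]

theorem esymmPart_eq_prod_range {n : ℕ} (μ : n.Partition) :
    esymmPart σ R μ = ∏ i ∈ range (n + 1), esymm σ R i ^ μ.parts.count i := by
  rw [esymmPart, prod_multiset_map_count]
  exact μ.parts.prod_toFinset_count_eq_of_subset μ.toFinset_parts_subset_range _ fun _ => pow_zero _

theorem esymmPart_partitionWithPartEquiv_symm {n a : ℕ} (ha1 : 1 ≤ a) (ha : a ≤ n)
    (μ : (n - a).Partition) :
    esymmPart σ R ((Nat.Partition.partitionWithPartEquiv ha1 ha).symm μ).1 =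
      esymm σ R a * esymmPart σ R μ := by
  simp [esymmPart]

end

theorem psum_eq_mul_esymm_sub_sum_Ioo {R : Type*} [CommRing R] {k : ℕ} (hk : 0 < k) :
    psum σ R k = (-1) ^ (k + 1) * k * esymm σ R k -
      ∑ i ∈ Ioo 0 k, (-1) ^ i * esymm σ R i * psum σ R (k - i) := by
  rw [psum_eq_mul_esymm_sub_sum σ R k hk, sum_filter,
    Nat.sum_antidiagonal_eq_sum_range_succ
      (fun i j => if i ∈ Set.Ioo 0 k then (-1) ^ i * esymm σ R i * psum σ R j else 0), ← sum_filter]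
  congr 2
  ext i
  simp only [mem_filter, mem_range, Set.mem_Ioo, mem_Ioo]
  omega

noncomputable def waringSum (n : ℕ) : MvPolynomial σ ℚ :=
  ∑ μ : n.Partition, waringCoeff μ.parts • esymmPart σ ℚ μ

theorem neg_one_pow_mul_esymm_mul_waringSum {k i : ℕ} (hi : 0 < i) (hik : i ≤ k) :
    (-1) ^ i * esymm σ ℚ i * waringSum σ (k - i) =
      ∑ μ : k.Partition with i ∈ μ.parts,
        ((-1) ^ i * waringCoeff (μ.parts.erase i)) • esymmPart σ ℚ μ := by
  rw [sum_subtype _ fun μ => mem_filter_univ μ,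
    ← (Nat.Partition.partitionWithPartEquiv hi hik).symm.sum_comp, waringSum, mul_sum]
  refine sum_congr rfl fun μ _ => ?_
  rw [Nat.Partition.partitionWithPartEquiv_symm_apply_parts, Multiset.erase_cons_head,
    esymmPart_partitionWithPartEquiv_symm, smul_eq_C_mul, smul_eq_C_mul, map_mul, map_pow,
    map_neg, map_one]
  ring

theorem waringCoeff_smul_esymmPart_indiscrete {k : ℕ} (hk : 0 < k) :
    waringCoeff (Nat.Partition.indiscrete k).parts • esymmPart σ ℚ (.indiscrete k) =
      (-1) ^ (k + 1) * k * esymm σ ℚ k := by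
  obtain ⟨m, rfl⟩ := Nat.exists_eq_add_one_of_ne_zero hk.ne'
  simp [waringCoeff, smul_eq_C_mul, pow_succ]

theorem waringSum_eq_mul_esymm_sub_sum {k : ℕ} (hk : 0 < k) :
    waringSum σ k = (-1) ^ (k + 1) * k * esymm σ ℚ k -
      ∑ i ∈ Ioo 0 k, (-1) ^ i * esymm σ ℚ i * waringSum σ (k - i) := by
  set F : k.Partition → ℕ → MvPolynomial σ ℚ :=
    fun μ i => ((-1) ^ i * waringCoeff (μ.parts.erase i)) • esymmPart σ ℚ μ
  have hswap : ∑ i ∈ Ioo 0 k, (-1) ^ i * esymm σ ℚ i * waringSum σ (k - i) =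
      ∑ μ : k.Partition, ∑ i ∈ μ.parts.toFinset with i < k, F μ i := by
    rw [sum_congr rfl fun i hi =>
      neg_one_pow_mul_esymm_mul_waringSum σ (mem_Ioo.1 hi).1 (mem_Ioo.1 hi).2.le]
    refine sum_comm' fun i μ => ?_
    simp only [mem_Ioo, mem_filter, mem_univ, Multiset.mem_toFinset, true_and, and_true]
    exact ⟨fun ⟨⟨_, hik⟩, hi⟩ => ⟨hi, hik⟩, fun ⟨hi, hik⟩ => ⟨⟨μ.parts_pos hi, hik⟩, hi⟩⟩
  have hinner : ∀ μ : k.Partition, ∑ i ∈ μ.parts.toFinset with i < k, F μ i =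
      -(waringCoeff μ.parts • esymmPart σ ℚ μ) +
        if μ = .indiscrete k then waringCoeff μ.parts • esymmPart σ ℚ μ else 0 := by
    intro μ
    by_cases hμ : μ = .indiscrete k
    · subst hμ
      simp [Nat.Partition.indiscrete_parts hk.ne', filter_singleton]
    · rw [if_neg hμ, add_zero, filter_true_of_mem fun i hi =>
          Nat.Partition.lt_of_mem_parts_of_ne_indiscrete hμ (Multiset.mem_toFinset.1 hi),
        ← sum_smul, sum_neg_one_pow_mul_waringCoeff_erase (fun _ => μ.parts_pos)
          (Nat.Partition.two_le_card_parts_of_ne_indiscrete hk.ne' hμ), neg_smul]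
  rw [hswap, sum_congr rfl fun μ _ => hinner μ, sum_add_distrib, sum_neg_distrib,
    sum_ite_eq', if_pos (mem_univ _), waringCoeff_smul_esymmPart_indiscrete σ hk, waringSum]
  ring

theorem psum_eq_waringSum {k : ℕ} (hk : 0 < k) : psum σ ℚ k = waringSum σ k := by
  induction k using Nat.strong_induction_on with
  | _ k ih =>
    have ih' : ∀ i ∈ Ioo 0 k, psum σ ℚ (k - i) = waringSum σ (k - i) := fun i hi => by
      obtain ⟨hi0, hik⟩ := mem_Ioo.1 hi
      exact ih (k - i) (by omega) (by omega)
    rw [psum_eq_mul_esymm_sub_sum_Ioo σ hk, waringSum_eq_mul_esymm_sub_sum σ hk,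
      sum_congr rfl fun i hi => by rw [ih' i hi]]

end MvPolynomial

/-- Waring's formula: the power sum `p_k` expressed in terms of the elementary
symmetric polynomials, the sum ranging over all partitions
`λ = 1^{m₁} 2^{m₂} ⋯` of `k`, with `l(λ)` the number of parts. -/
theorem stmt_2 (σ : Type*) [Fintype σ] (k : ℕ) (hk : 1 ≤ k) :
    MvPolynomial.psum σ ℚ k =
      ∑ l : Nat.Partition k,
        ((-1 : ℚ) ^ (k - l.parts.card) * k * (l.parts.card - 1).factorial /
          ∏ i ∈ Finset.range (k + 1), (l.parts.count i).factorial) •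
          ∏ i ∈ Finset.range (k + 1),
            MvPolynomial.esymm σ ℚ i ^ l.parts.count i := by
  rw [MvPolynomial.psum_eq_waringSum σ hk]
  refine sum_congr rfl fun μ _ => ?_
  rw [esymmPart_eq_prod_range, waringCoeff, μ.parts_sum,
    μ.parts.prod_toFinset_count_eq_of_subset μ.toFinset_parts_subset_range (fun _ m => m !)
      fun _ => rfl]
end

section
/- Let W_n = a·U_n + b·V_n and Ω = a² + 4b² − b²p². Then for all integers k ≥ 1 and m, n ≥ 0: W_n^{2k} + W_{n+m}^{2k} = Σ_{r=0}^{k} θ_{k,r}(m) · Ω^{k−r} · W_n^r · W_{n+m}^r, where θ_{k,r}(m) = Σ_{0 ≤ 2j ≤ k, 2j ≤ r, r ≤ k} (−1)^j · k·(k−j−1)! / (j!·(k−r)!·(r−2j)!) · V_m^{r−2j} · U_m^{2k−2r}. -/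
open Finset

noncomputable def cc (k j : ℕ) : ℝ :=
  if 2*j ≤ k then (-1)^j * k * (k-j-1).factorial / (j.factorial * (k-2*j).factorial) else 0

lemma cc_zero {k : ℕ} (hk : 1 ≤ k) : cc k 0 = 1 := by
  obtain ⟨t, rfl⟩ : ∃ t, k = t + 1 := ⟨k-1, by omega⟩
  simp only [cc, Nat.factorial_succ]
  rw [if_pos (by omega)]
  simp only [Nat.sub_zero, Nat.mul_zero, Nat.factorial_zero, Nat.factorial, pow_zero]
  have r1 : t + 1 - 1 = t := by omega
  rw [r1]
  have ht : (t.factorial : ℝ) ≠ 0 := by positivity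
  push_cast [Nat.factorial_succ]
  field_simp

lemma cc_big {k j : ℕ} (h : k < 2*j) : cc k j = 0 := by
  simp [cc, Nat.not_le.mpr h]

lemma cc_rec (k j : ℕ) (hk : 1 ≤ k) : cc (k+2) (j+1) = cc (k+1) (j+1) - cc k j := by
  rcases Nat.lt_or_ge (k+1) (2*(j+1)) with h | h
  · rcases Nat.lt_or_ge (k+2) (2*(j+1)) with h2 | h2
    · rw [cc_big (by omega), cc_big (by omega), cc_big (by omega)]; ring
    -- 2(j+1) = k+2, k even, cc(k+1,j+1) = 0
    · have hkj : k = 2*j := by omega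
      subst hkj
      obtain ⟨i, rfl⟩ : ∃ i, j = i + 1 := ⟨j-1, by omega⟩
      have z : cc (2*(i+1)+1) (i+1+1) = 0 := cc_big (by omega)
      rw [z]
      rw [cc, cc, if_pos (by omega), if_pos (by omega)]
      have r1 : 2*(i+1)+2 - (i+1+1) - 1 = i + 1 := by omega
      have r2 : 2*(i+1)+2 - 2*(i+1+1) = 0 := by omega
      have r3 : 2*(i+1) - (i+1) - 1 = i := by omega
      have r4 : 2*(i+1) - 2*(i+1) = 0 := by omega
      rw [r1, r2, r3, r4]
      have f1 : (i+1+1).factorial = (i+1+1) * (i+1).factorial := rfl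
      have f2 : (i+1).factorial = (i+1) * i.factorial := rfl
      push_cast [f1, f2, Nat.factorial_zero]
      have hi : (i.factorial : ℝ) ≠ 0 := by positivity
      field_simp
      ring
  · -- main case 2(j+1) ≤ k+1
    obtain ⟨s, hs⟩ : ∃ s, k = 2*j + 1 + s := ⟨k - (2*j+1), by omega⟩
    subst hs
    have e1 : 2*(j+1) ≤ 2*j+1+s+2 := by omega
    have e2 : 2*(j+1) ≤ 2*j+1+s+1 := by omega
    have e3 : 2*j ≤ 2*j+1+s := by omega
    rw [cc, cc, cc, if_pos e1, if_pos e2, if_pos e3]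
    have r1 : 2*j+1+s+2 - (j+1) - 1 = j + s + 1 := by omega
    have r2 : 2*j+1+s+2 - 2*(j+1) = s + 1 := by omega
    have r3 : 2*j+1+s+1 - (j+1) - 1 = j + s := by omega
    have r4 : 2*j+1+s+1 - 2*(j+1) = s := by omega
    have r5 : 2*j+1+s - j - 1 = j + s := by omega
    have r6 : 2*j+1+s - 2*j = s + 1 := by omega
    rw [r1, r2, r3, r4, r5, r6]
    have f1 : (j+s+1).factorial = (j+s+1) * (j+s).factorial := rfl
    have f2 : (s+1).factorial = (s+1) * s.factorial := rfl
    have f3 : (j+1).factorial = (j+1) * j.factorial := rfl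
    push_cast [f1, f2, f3]
    have hj : (j.factorial : ℝ) ≠ 0 := by positivity
    have hsf : (s.factorial : ℝ) ≠ 0 := by positivity
    have hjs : ((j+s).factorial : ℝ) ≠ 0 := by positivity
    field_simp
    ring

lemma waring : ∀ k : ℕ, 1 ≤ k → ∀ x y : ℝ,
    x^k + y^k = ∑ j ∈ range (k+1), cc k j * (x+y)^(k-2*j) * (x*y)^j := by
  have main : ∀ k : ℕ, 1 ≤ k → (∀ x y : ℝ,
      x^k + y^k = ∑ j ∈ range (k+1), cc k j * (x+y)^(k-2*j) * (x*y)^j) ∧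
      (∀ x y : ℝ,
      x^(k+1) + y^(k+1) = ∑ j ∈ range (k+2), cc (k+1) j * (x+y)^(k+1-2*j) * (x*y)^j) := by
    intro k hk
    induction k, hk using Nat.le_induction with
    | base =>
      constructor
      · intro x y
        norm_num [Finset.sum_range_succ, cc, Nat.factorial]
      · intro x y
        norm_num [Finset.sum_range_succ, cc, Nat.factorial]
        ring
    | succ k hk ih =>
      refine ⟨ih.2, ?_⟩
      intro x y
      have IH0 := ih.1 x y
      have IH1 := ih.2 x y
      set P := x + y with hP
      set Q := x * y with hQ
      have e : x^(k+2) + y^(k+2) = P * (x^(k+1)+y^(k+1)) - Q * (x^k+y^k) := by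
        simp only [hP, hQ]; ring
      have hA : P * (∑ j ∈ range (k+2), cc (k+1) j * P^(k+1-2*j) * Q^j)
          = (∑ j ∈ range (k+2), cc (k+1) (j+1) * P^(k+2-2*(j+1)) * Q^(j+1)) + P^(k+2) := by
        rw [Finset.sum_range_succ' (fun j => cc (k+1) j * P^(k+1-2*j) * Q^j) (k+1)]
        rw [Finset.sum_range_succ (fun j => cc (k+1) (j+1) * P^(k+2-2*(j+1)) * Q^(j+1)) (k+1)]
        rw [cc_big (show k+1 < 2*(k+1+1) by omega), cc_zero (by omega)]
        rw [mul_add]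
        rw [Finset.mul_sum]
        have : ∀ j ∈ range (k+1), P * (cc (k+1) (j+1) * P^(k+1-2*(j+1)) * Q^(j+1))
            = cc (k+1) (j+1) * P^(k+2-2*(j+1)) * Q^(j+1) := by
          intro j hj
          rcases Nat.lt_or_ge (k+1) (2*(j+1)) with h | h
          · rw [cc_big h]; ring
          · have : k+2-2*(j+1) = (k+1-2*(j+1)) + 1 := by omega
            rw [this, pow_succ]; ring
        rw [Finset.sum_congr rfl this]
        simp only [Nat.mul_zero, Nat.sub_zero, pow_zero, mul_one, one_mul]
        rw [show k+2 = (k+1)+1 from rfl, pow_succ]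
        ring
      have hB : Q * (∑ j ∈ range (k+1), cc k j * P^(k-2*j) * Q^j)
          = ∑ j ∈ range (k+2), cc k j * P^(k+2-2*(j+1)) * Q^(j+1) := by
        rw [Finset.sum_range_succ (fun j => cc k j * P^(k+2-2*(j+1)) * Q^(j+1)) (k+1)]
        rw [cc_big (show k < 2*(k+1) by omega)]
        rw [Finset.mul_sum]
        have : ∀ j ∈ range (k+1), Q * (cc k j * P^(k-2*j) * Q^j)
            = cc k j * P^(k+2-2*(j+1)) * Q^(j+1) := by
          intro j hj
          have : k+2-2*(j+1) = k - 2*j := by omega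
          rw [this, pow_succ]; ring
        rw [Finset.sum_congr rfl this]
        ring
      have hR : (∑ j ∈ range (k+3), cc (k+2) j * P^(k+2-2*j) * Q^j)
          = (∑ j ∈ range (k+2), cc (k+1) (j+1) * P^(k+2-2*(j+1)) * Q^(j+1))
            - (∑ j ∈ range (k+2), cc k j * P^(k+2-2*(j+1)) * Q^(j+1)) + P^(k+2) := by
        rw [Finset.sum_range_succ' (fun j => cc (k+2) j * P^(k+2-2*j) * Q^j) (k+2)]
        rw [cc_zero (by omega)]
        have : ∀ j ∈ range (k+2), cc (k+2) (j+1) * P^(k+2-2*(j+1)) * Q^(j+1)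
            = cc (k+1) (j+1) * P^(k+2-2*(j+1)) * Q^(j+1)
              - cc k j * P^(k+2-2*(j+1)) * Q^(j+1) := by
          intro j hj
          rw [cc_rec k j hk]; ring
        rw [Finset.sum_congr rfl this, Finset.sum_sub_distrib]
        simp only [Nat.mul_zero, Nat.sub_zero, pow_zero, mul_one, one_mul]
      rw [e, IH0, IH1, hR]
      linear_combination hA - hB
  intro k hk
  exact (main k hk).1

lemma keylem (p a b : ℝ) (U V W : ℕ → ℝ)
    (hU0 : U 0 = 0) (hU1 : U 1 = 1)
    (hUrec : ∀ n, U (n + 2) = p * U (n + 1) - U n)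
    (hV0 : V 0 = 2) (hV1 : V 1 = p)
    (hVrec : ∀ n, V (n + 2) = p * V (n + 1) - V n)
    (hW : ∀ n, W n = a * U n + b * V n)
    (Ω : ℝ) (hΩ : Ω = a ^ 2 + 4 * b ^ 2 - b ^ 2 * p ^ 2) :
    ∀ m n : ℕ, W (n + m) ^ 2 + W n ^ 2 = Ω * U m ^ 2 + V m * (W n * W (n + m)) := by
  have hWrec : ∀ n, W (n + 2) = p * W (n + 1) - W n := by
    intro n
    rw [hW, hW, hW, hUrec, hVrec]; ring
  have hE : ∀ n, W (n+1) ^ 2 + W n ^ 2 - p * W n * W (n+1) = Ω := by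
    intro n
    induction n with
    | zero =>
      rw [hW 0, hW 1, hU0, hU1, hV0, hV1, hΩ]; ring
    | succ n ih =>
      have hr := hWrec n
      calc W (n+1+1) ^ 2 + W (n+1) ^ 2 - p * W (n+1) * W (n+1+1)
          = W (n+1) ^ 2 + W n ^ 2 - p * W n * W (n+1) := by
            rw [show n+1+1 = n+2 from rfl, hr]; ring
        _ = Ω := ih
  -- triple induction on m
  suffices h : ∀ m, (∀ n, W (n + m) ^ 2 + W n ^ 2 = Ω * U m ^ 2 + V m * (W n * W (n + m)))
      ∧ (∀ n, W (n + (m+1)) ^ 2 + W n ^ 2 = Ω * U (m+1) ^ 2 + V (m+1) * (W n * W (n + (m+1))))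
      ∧ (∀ n, W (n + (m+2)) ^ 2 + W n ^ 2 = Ω * U (m+2) ^ 2 + V (m+2) * (W n * W (n + (m+2)))) by
    intro m n; exact (h m).1 n
  intro m
  induction m with
  | zero =>
    refine ⟨?_, ?_, ?_⟩
    · intro n; simp only [Nat.add_zero, hU0, hV0]; ring
    · intro n
      simp only [Nat.zero_add, hU1, hV1]
      have := hE n
      linear_combination this
    · intro n
      have e2 : n + (0+2) = n + 2 := by omega
      rw [e2, hUrec 0, hVrec 0, hU0, hU1, hV0, hV1, hWrec n]
      have := hE n
      linear_combination (p^2) * this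
  | succ m ih =>
    obtain ⟨h0, h1, h2⟩ := ih
    refine ⟨h1, h2, ?_⟩
    intro n
    have e3 : n + (m+1+2) = (n + m) + 3 := by omega
    have e2 : n + (m+2) = (n + m) + 2 := by omega
    have e1 : n + (m+1) = (n + m) + 1 := by omega
    have e0 : n + m = n + m := rfl
    have hu3 : U (m+1+2) = p * U (m+2) - U (m+1) := by
      have := hUrec (m+1); rwa [show m+1+2 = m+1+2 from rfl] at this
    have hv3 : V (m+1+2) = p * V (m+2) - V (m+1) := hVrec (m+1)
    have hw3 : W ((n+m) + 3) = p * W ((n+m) + 2) - W ((n+m) + 1) := by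
      have := hWrec (n+m+1)
      rwa [show n+m+1+2 = (n+m)+3 from by omega, show n+m+1+1 = (n+m)+2 from by omega] at this
    have hu2 := hUrec m
    have hv2 := hVrec m
    have hw2 : W ((n+m) + 2) = p * W ((n+m) + 1) - W (n+m) := hWrec (n+m)
    have H0 := h0 n
    have H1 := h1 n
    have H2 := h2 n
    rw [e1] at H1
    rw [e2] at H2
    rw [e3, hu3, hv3, hw3, hu2, hv2, hw2]
    rw [hu2, hv2, hw2] at H2
    linear_combination (p^2-1) * H2 - (p^2-1) * H1 + H0

lemma reindex {M : Type*} [AddCommMonoid M] (k : ℕ) (F : ℕ → ℕ → M) :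
    ∑ r ∈ range (k+1), ∑ j ∈ range (r/2+1), F r j
      = ∑ j ∈ range (k/2+1), ∑ i ∈ range (k-2*j+1), F (2*j+i) j := by
  rw [← Finset.sum_sigma ((range (k+1))) (fun r => range (r/2+1)) (fun x => F x.1 x.2),
      ← Finset.sum_sigma ((range (k/2+1))) (fun j => range (k-2*j+1)) (fun y => F (2*y.1+y.2) y.1)]
  refine Finset.sum_nbij' (fun x => ⟨x.2, x.1 - 2*x.2⟩) (fun y => ⟨2*y.1+y.2, y.1⟩) ?_ ?_ ?_ ?_ ?_
  · intro x hx
    simp only [Finset.mem_sigma, Finset.mem_range] at hx ⊢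
    omega
  · intro y hy
    simp only [Finset.mem_sigma, Finset.mem_range] at hy ⊢
    omega
  · rintro ⟨r, j⟩ hx
    simp only [Finset.mem_sigma, Finset.mem_range] at hx
    have e : 2*j + (r - 2*j) = r := by omega
    simp [e]
  · rintro ⟨j, i⟩ hy
    simp only [Finset.mem_sigma, Finset.mem_range] at hy
    have e : 2*j + i - 2*j = i := by omega
    simp [e]
  · intro x hx
    simp only [Finset.mem_sigma, Finset.mem_range] at hx
    have : 2 * x.2 + (x.1 - 2 * x.2) = x.1 := by omega
    rw [this]

/-- Main theorem: `Wₙ^{2k} + W_{n+m}^{2k} = Σ_{r=0}^{k} θ_{k,r}(m) Ω^{k−r} Wₙʳ W_{n+m}ʳ`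
where `θ_{k,r}(m) = Σ_{0 ≤ 2j ≤ r ≤ k} (−1)ʲ k(k−j−1).factorial/(j!(k−r).factorial(r−2j).factorial) Vₘ^{r−2j} Uₘ^{2k−2r}`. -/
theorem stmt_4 (p a b : ℝ) (U V W : ℕ → ℝ)
    (hU0 : U 0 = 0) (hU1 : U 1 = 1)
    (hUrec : ∀ n, U (n + 2) = p * U (n + 1) - U n)
    (hV0 : V 0 = 2) (hV1 : V 1 = p)
    (hVrec : ∀ n, V (n + 2) = p * V (n + 1) - V n)
    (hW : ∀ n, W n = a * U n + b * V n)
    (Ω : ℝ) (hΩ : Ω = a ^ 2 + 4 * b ^ 2 - b ^ 2 * p ^ 2) :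
    ∀ (k : ℕ), 1 ≤ k → ∀ m n : ℕ,
      W n ^ (2 * k) + W (n + m) ^ (2 * k) =
        ∑ r ∈ Finset.range (k + 1),
          (∑ j ∈ Finset.range (r / 2 + 1),
            ((-1 : ℝ) ^ j * k * (k - j - 1).factorial /
              (j.factorial * (k - r).factorial * (r - 2 * j).factorial)) *
              V m ^ (r - 2 * j) * U m ^ (2 * k - 2 * r)) *
            Ω ^ (k - r) * W n ^ r * W (n + m) ^ r := by
  intro k hk m n
  have hq : W n ^ 2 + W (n+m) ^ 2 = V m * (W n * W (n+m)) + Ω * U m ^ 2 := by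
    have := keylem p a b U V W hU0 hU1 hUrec hV0 hV1 hVrec hW Ω hΩ m n
    linarith
  set G : ℕ → ℕ → ℝ := fun r j =>
    ((-1 : ℝ) ^ j * k * (k - j - 1).factorial /
        (j.factorial * (k - r).factorial * (r - 2 * j).factorial)) *
      V m ^ (r - 2 * j) * U m ^ (2 * k - 2 * r) * Ω ^ (k - r) * W n ^ r * W (n + m) ^ r
    with hG
  calc W n ^ (2*k) + W (n+m) ^ (2*k)
      = (W n ^ 2) ^ k + (W (n+m) ^ 2) ^ k := by rw [← pow_mul, ← pow_mul]
    _ = ∑ j ∈ range (k+1), cc k j * (W n ^ 2 + W (n+m) ^ 2) ^ (k - 2*j)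
          * ((W n ^ 2) * (W (n+m) ^ 2)) ^ j := waring k hk _ _
    _ = ∑ j ∈ range (k+1), ∑ i ∈ range (k - 2*j + 1),
          cc k j * ((V m * (W n * W (n+m))) ^ i * (Ω * U m ^ 2) ^ (k - 2*j - i)
            * ((k - 2*j).choose i)) * ((W n ^ 2) * (W (n+m) ^ 2)) ^ j := by
        refine Finset.sum_congr rfl fun j hj => ?_
        rw [hq, add_pow, Finset.mul_sum, Finset.sum_mul]
    _ = ∑ j ∈ range (k/2+1), ∑ i ∈ range (k - 2*j + 1),
          cc k j * ((V m * (W n * W (n+m))) ^ i * (Ω * U m ^ 2) ^ (k - 2*j - i)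
            * ((k - 2*j).choose i)) * ((W n ^ 2) * (W (n+m) ^ 2)) ^ j := by
        symm
        apply Finset.sum_subset
        · intro x hx
          simp only [Finset.mem_range] at hx ⊢
          omega
        · intro x hx hnx
          simp only [Finset.mem_range] at hx hnx
          have hz : cc k x = 0 := cc_big (by omega)
          simp [hz]
    _ = ∑ j ∈ range (k/2+1), ∑ i ∈ range (k - 2*j + 1), G (2*j+i) j := by
        refine Finset.sum_congr rfl fun j hj => Finset.sum_congr rfl fun i hi => ?_
        simp only [Finset.mem_range] at hj hi
        obtain ⟨t, rfl⟩ : ∃ t, k = 2*j + i + t := ⟨k - 2*j - i, by omega⟩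
        rw [hG]
        simp only []
        rw [cc, if_pos (by omega : 2*j ≤ 2*j+i+t)]
        have e1 : 2*j+i+t - 2*j = i + t := by omega
        have e2 : 2*j+i+t - 2*j - i = t := by omega
        have e3 : 2*j+i+t - (2*j+i) = t := by omega
        have e4 : 2*j+i - 2*j = i := by omega
        have e5 : 2*(2*j+i+t) - 2*(2*j+i) = 2*t := by omega
        have e6 : i + t - i = t := by omega
        rw [e1, e6, e3, e4, e5]
        have hC : (((i+t).choose i : ℕ) : ℝ)
            = (i+t).factorial / (i.factorial * t.factorial) := by
          rw [Nat.cast_choose ℝ (by omega : i ≤ i+t), show i+t-i = t from by omega]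
        rw [hC]
        have h1 : (j.factorial : ℝ) ≠ 0 := by positivity
        have h2 : (i.factorial : ℝ) ≠ 0 := by positivity
        have h3 : (t.factorial : ℝ) ≠ 0 := by positivity
        have h4 : ((i+t).factorial : ℝ) ≠ 0 := by positivity
        field_simp
        ring
    _ = ∑ r ∈ range (k+1), ∑ j ∈ range (r/2+1), G r j := (reindex k G).symm
    _ = ∑ r ∈ Finset.range (k + 1),
          (∑ j ∈ Finset.range (r / 2 + 1),
            ((-1 : ℝ) ^ j * k * (k - j - 1).factorial /
              (j.factorial * (k - r).factorial * (r - 2 * j).factorial)) *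
              V m ^ (r - 2 * j) * U m ^ (2 * k - 2 * r)) *
            Ω ^ (k - r) * W n ^ r * W (n + m) ^ r := by
        refine Finset.sum_congr rfl fun r hr => ?_
        rw [Finset.sum_mul, Finset.sum_mul, Finset.sum_mul]
end

section
/- With W_n = a·U_n + b·V_n and Ω = a² + 4b² − b²p², the case m = 1 of the main identity holds: W_n^{2k} + W_{n+1}^{2k} = Σ_{r=0}^{k} θ_{k,r}(1) · Ω^{k−r} · W_n^r · W_{n+1}^r, where θ_{k,r}(1) = Σ_{0 ≤ 2j ≤ r} (−1)^j · k·(k−1−j)! / ((k−r)!·j!·(r−2j)!) · p^{r−2j}. -/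
open Finset
lemma fact_ne (n : ℕ) : ((n.factorial : ℕ) : ℝ) ≠ 0 :=
  Nat.cast_ne_zero.mpr n.factorial_ne_zero

lemma den_ne (a b c : ℕ) : ((a.factorial : ℕ) : ℝ) * (b.factorial : ℕ) * (c.factorial : ℕ) ≠ 0 :=
  mul_ne_zero (mul_ne_zero (fact_ne a) (fact_ne b)) (fact_ne c)

noncomputable def th (p : ℝ) (k r : ℕ) : ℝ :=
  ∑ j ∈ Finset.range (r / 2 + 1),
    ((-1 : ℝ) ^ j * k * (k - 1 - j).factorial /
      ((k - r).factorial * j.factorial * (r - 2 * j).factorial)) * p ^ (r - 2 * j)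

lemma perj (p : ℝ) (k r j : ℕ) (hk : 1 ≤ k) (hr : r ≤ k + 2) (hj2 : 2 * j ≤ r) :
    ((-1 : ℝ) ^ j * ((k+2 : ℕ) : ℝ) * ((k + 2 - 1 - j).factorial : ℝ) /
      (((k + 2 - r).factorial : ℝ) * (j.factorial : ℝ) * ((r - 2 * j).factorial : ℝ))) * p ^ (r - 2 * j)
    = ((-1 : ℝ) ^ j * ((k+1 : ℕ) : ℝ) * ((k - j).factorial : ℝ) * ((k + 2 - r : ℕ) : ℝ) /
        (((k + 2 - r).factorial : ℝ) * (j.factorial : ℝ) * ((r - 2 * j).factorial : ℝ))) * p ^ (r - 2 * j)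
    + ((-1 : ℝ) ^ j * ((k+1 : ℕ) : ℝ) * ((k - j).factorial : ℝ) * ((r - 2 * j : ℕ) : ℝ) /
        (((k + 2 - r).factorial : ℝ) * (j.factorial : ℝ) * ((r - 2 * j).factorial : ℝ))) * p ^ (r - 2 * j)
    + ((-1 : ℝ) ^ j * ((k : ℕ) : ℝ) * ((k - j).factorial : ℝ) * ((j : ℕ) : ℝ) /
        (((k + 2 - r).factorial : ℝ) * (j.factorial : ℝ) * ((r - 2 * j).factorial : ℝ))) * p ^ (r - 2 * j) := by
  have hjk : j ≤ k := by omega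
  have e0 : (k + 2 - 1 - j).factorial = (k + 1 - j) * (k - j).factorial := by
    rw [show k + 2 - 1 - j = (k - j) + 1 from by omega]
    rw [Nat.factorial_succ]
    congr 1
    omega
  rw [e0]
  push_cast [Nat.cast_sub (show j ≤ k + 1 from by omega), Nat.cast_sub hr, Nat.cast_sub hj2]
  ring

lemma th_rec (p : ℝ) (k r : ℕ) (hk : 1 ≤ k) (hr : r ≤ k + 2) :
    th p (k + 2) r =
      (if r ≤ k + 1 then th p (k + 1) r else 0)
      + p * (if 1 ≤ r then th p (k + 1) (r - 1) else 0)
      - (if 2 ≤ r then th p k (r - 2) else 0) := by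
  have hsplit : th p (k + 2) r
      = (∑ j ∈ Finset.range (r / 2 + 1),
          ((-1 : ℝ) ^ j * ((k+1 : ℕ) : ℝ) * ((k - j).factorial : ℝ) * ((k + 2 - r : ℕ) : ℝ) /
            (((k + 2 - r).factorial : ℝ) * (j.factorial : ℝ) * ((r - 2 * j).factorial : ℝ))) * p ^ (r - 2 * j))
      + (∑ j ∈ Finset.range (r / 2 + 1),
          ((-1 : ℝ) ^ j * ((k+1 : ℕ) : ℝ) * ((k - j).factorial : ℝ) * ((r - 2 * j : ℕ) : ℝ) /
            (((k + 2 - r).factorial : ℝ) * (j.factorial : ℝ) * ((r - 2 * j).factorial : ℝ))) * p ^ (r - 2 * j))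
      + (∑ j ∈ Finset.range (r / 2 + 1),
          ((-1 : ℝ) ^ j * ((k : ℕ) : ℝ) * ((k - j).factorial : ℝ) * ((j : ℕ) : ℝ) /
            (((k + 2 - r).factorial : ℝ) * (j.factorial : ℝ) * ((r - 2 * j).factorial : ℝ))) * p ^ (r - 2 * j)) := by
    rw [th, ← Finset.sum_add_distrib, ← Finset.sum_add_distrib]
    refine Finset.sum_congr rfl fun j hj => ?_
    have hj2 : 2 * j ≤ r := by
      have := Finset.mem_range.mp hj; omega
    exact perj p k r j hk hr hj2
  have hS1 : (∑ j ∈ Finset.range (r / 2 + 1),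
          ((-1 : ℝ) ^ j * ((k+1 : ℕ) : ℝ) * ((k - j).factorial : ℝ) * ((k + 2 - r : ℕ) : ℝ) /
            (((k + 2 - r).factorial : ℝ) * (j.factorial : ℝ) * ((r - 2 * j).factorial : ℝ))) * p ^ (r - 2 * j))
      = (if r ≤ k + 1 then th p (k + 1) r else 0) := by
    by_cases hc : r ≤ k + 1
    · rw [if_pos hc, th]
      refine Finset.sum_congr rfl fun j hj => ?_
      rw [show k + 1 - 1 - j = k - j from by omega]
      have e1 : (k + 2 - r).factorial = (k + 2 - r) * (k + 1 - r).factorial := by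
        rw [show k + 2 - r = (k + 1 - r) + 1 from by omega]
        exact Nat.factorial_succ _
      have hdiv : ((-1 : ℝ) ^ j * ((k+1 : ℕ) : ℝ) * ((k - j).factorial : ℝ) * ((k + 2 - r : ℕ) : ℝ)) /
            (((k + 2 - r).factorial : ℝ) * (j.factorial : ℝ) * ((r - 2 * j).factorial : ℝ))
          = ((-1 : ℝ) ^ j * ((k+1 : ℕ) : ℝ) * ((k - j).factorial : ℝ)) /
            (((k + 1 - r).factorial : ℝ) * (j.factorial : ℝ) * ((r - 2 * j).factorial : ℝ)) := by
        rw [div_eq_div_iff (den_ne _ _ _) (den_ne _ _ _), e1, Nat.cast_mul]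
        ring
      rw [hdiv]
    · rw [if_neg hc]
      refine Finset.sum_eq_zero fun j hj => ?_
      rw [show k + 2 - r = 0 from by omega]
      simp
  have hS2 : (∑ j ∈ Finset.range (r / 2 + 1),
          ((-1 : ℝ) ^ j * ((k+1 : ℕ) : ℝ) * ((k - j).factorial : ℝ) * ((r - 2 * j : ℕ) : ℝ) /
            (((k + 2 - r).factorial : ℝ) * (j.factorial : ℝ) * ((r - 2 * j).factorial : ℝ))) * p ^ (r - 2 * j))
      = p * (if 1 ≤ r then th p (k + 1) (r - 1) else 0) := by
    by_cases h1 : 1 ≤ r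
    · rw [if_pos h1, th, Finset.mul_sum]
      have hterm : ∀ j, 2 * j + 1 ≤ r →
          ((-1 : ℝ) ^ j * ((k+1 : ℕ) : ℝ) * ((k - j).factorial : ℝ) * ((r - 2 * j : ℕ) : ℝ) /
            (((k + 2 - r).factorial : ℝ) * (j.factorial : ℝ) * ((r - 2 * j).factorial : ℝ))) * p ^ (r - 2 * j)
          = p * (((-1 : ℝ) ^ j * ((k+1 : ℕ) : ℝ) * ((k + 1 - 1 - j).factorial : ℝ) /
              (((k + 1 - (r - 1)).factorial : ℝ) * (j.factorial : ℝ) * ((r - 1 - 2 * j).factorial : ℝ))) * p ^ (r - 1 - 2 * j)) := by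
        intro j hj
        rw [show k + 1 - 1 - j = k - j from by omega,
            show k + 1 - (r - 1) = k + 2 - r from by omega]
        have e1 : (r - 2 * j).factorial = (r - 2 * j) * (r - 1 - 2 * j).factorial := by
          rw [show r - 2 * j = (r - 1 - 2 * j) + 1 from by omega]
          exact Nat.factorial_succ _
        have e2 : p ^ (r - 2 * j) = p ^ (r - 1 - 2 * j) * p := by
          rw [← pow_succ]
          congr 1
          omega
        have hdiv : ((-1 : ℝ) ^ j * ((k+1 : ℕ) : ℝ) * ((k - j).factorial : ℝ) * ((r - 2 * j : ℕ) : ℝ)) /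
              (((k + 2 - r).factorial : ℝ) * (j.factorial : ℝ) * ((r - 2 * j).factorial : ℝ))
            = ((-1 : ℝ) ^ j * ((k+1 : ℕ) : ℝ) * ((k - j).factorial : ℝ)) /
              (((k + 2 - r).factorial : ℝ) * (j.factorial : ℝ) * ((r - 1 - 2 * j).factorial : ℝ)) := by
          rw [div_eq_div_iff (den_ne _ _ _) (den_ne _ _ _), e1, Nat.cast_mul]
          ring
        rw [e2, hdiv]
        ring
      rcases Nat.even_or_odd r with he | ho
      · have hmod : r % 2 = 0 := Nat.even_iff.mp he
        rw [show r / 2 + 1 = ((r - 1) / 2 + 1) + 1 from by omega, Finset.sum_range_succ]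
        have hz : ((-1 : ℝ) ^ ((r-1)/2 + 1) * ((k+1 : ℕ) : ℝ) * ((k - ((r-1)/2 + 1)).factorial : ℝ) * ((r - 2 * ((r-1)/2 + 1) : ℕ) : ℝ) /
            (((k + 2 - r).factorial : ℝ) * (((r-1)/2 + 1).factorial : ℝ) * ((r - 2 * ((r-1)/2 + 1)).factorial : ℝ))) * p ^ (r - 2 * ((r-1)/2 + 1)) = 0 := by
          rw [show r - 2 * ((r-1)/2 + 1) = 0 from by omega]
          simp
        rw [hz, add_zero]
        refine Finset.sum_congr rfl fun j hj => ?_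
        have hj2 : 2 * j + 1 ≤ r := by
          have := Finset.mem_range.mp hj; omega
        exact hterm j hj2
      · have hmod : r % 2 = 1 := Nat.odd_iff.mp ho
        rw [show r / 2 + 1 = (r - 1) / 2 + 1 from by omega]
        refine Finset.sum_congr rfl fun j hj => ?_
        have hj2 : 2 * j + 1 ≤ r := by
          have := Finset.mem_range.mp hj; omega
        exact hterm j hj2
    · rw [if_neg h1]
      have : r = 0 := by omega
      subst this
      simp
  have hS3 : (∑ j ∈ Finset.range (r / 2 + 1),
          ((-1 : ℝ) ^ j * ((k : ℕ) : ℝ) * ((k - j).factorial : ℝ) * ((j : ℕ) : ℝ) /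
            (((k + 2 - r).factorial : ℝ) * (j.factorial : ℝ) * ((r - 2 * j).factorial : ℝ))) * p ^ (r - 2 * j))
      = - (if 2 ≤ r then th p k (r - 2) else 0) := by
    by_cases h2 : 2 ≤ r
    · rw [if_pos h2, th, Finset.sum_range_succ']
      have h0 : ((-1 : ℝ) ^ 0 * ((k : ℕ) : ℝ) * ((k - 0).factorial : ℝ) * ((0 : ℕ) : ℝ) /
            (((k + 2 - r).factorial : ℝ) * ((0 : ℕ).factorial : ℝ) * ((r - 2 * 0).factorial : ℝ))) * p ^ (r - 2 * 0) = 0 := by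
        simp
      rw [h0, add_zero, show (r - 2) / 2 + 1 = r / 2 from by omega, ← Finset.sum_neg_distrib]
      refine Finset.sum_congr rfl fun j hj => ?_
      have hjr : j < r / 2 := Finset.mem_range.mp hj
      rw [show k - (j + 1) = k - 1 - j from by omega,
          show r - 2 * (j + 1) = r - 2 - 2 * j from by omega,
          show k - (r - 2) = k + 2 - r from by omega]
      have e1 : (j + 1).factorial = (j + 1) * j.factorial := Nat.factorial_succ _
      have e2 : (-1 : ℝ) ^ (j + 1) = -((-1 : ℝ) ^ j) := by
        rw [pow_succ]; ring
      have hdiv : ((-1 : ℝ) ^ (j+1) * ((k : ℕ) : ℝ) * ((k - 1 - j).factorial : ℝ) * ((j + 1 : ℕ) : ℝ)) /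
            (((k + 2 - r).factorial : ℝ) * ((j+1).factorial : ℝ) * ((r - 2 - 2 * j).factorial : ℝ))
          = (-((-1 : ℝ) ^ j * ((k : ℕ) : ℝ) * ((k - 1 - j).factorial : ℝ))) /
            (((k + 2 - r).factorial : ℝ) * (j.factorial : ℝ) * ((r - 2 - 2 * j).factorial : ℝ)) := by
        rw [div_eq_div_iff (den_ne _ _ _) (den_ne _ _ _), e1, Nat.cast_mul, e2]
        push_cast
        ring
      rw [hdiv]
      ring
    · rw [if_neg h2, show r / 2 + 1 = 1 from by omega, Finset.sum_range_one]
      simp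
  rw [hsplit, hS1, hS2, hS3]
  ring

lemma Gsum (p Ω s : ℝ) (k : ℕ) (hk : 1 ≤ k) :
    (∑ r ∈ Finset.range (k + 3), th p (k + 2) r * Ω ^ (k + 2 - r) * s ^ r)
    = (Ω + p * s) * (∑ r ∈ Finset.range (k + 2), th p (k + 1) r * Ω ^ (k + 1 - r) * s ^ r)
      - s ^ 2 * (∑ r ∈ Finset.range (k + 1), th p k r * Ω ^ (k - r) * s ^ r) := by
  have hA : ∀ r ∈ Finset.range (k + 3),
      th p (k + 2) r * Ω ^ (k + 2 - r) * s ^ r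
      = (if r ≤ k + 1 then th p (k + 1) r else 0) * Ω ^ (k + 2 - r) * s ^ r
        + (if 1 ≤ r then th p (k + 1) (r - 1) else 0) * Ω ^ (k + 2 - r) * s ^ r * p
        - (if 2 ≤ r then th p k (r - 2) else 0) * Ω ^ (k + 2 - r) * s ^ r := by
    intro r hr
    have hr2 : r ≤ k + 2 := by have := Finset.mem_range.mp hr; omega
    rw [th_rec p k r hk hr2]
    ring
  rw [Finset.sum_congr rfl hA, Finset.sum_sub_distrib, Finset.sum_add_distrib]
  have e1 : (∑ r ∈ Finset.range (k + 3), (if r ≤ k + 1 then th p (k + 1) r else 0) * Ω ^ (k + 2 - r) * s ^ r)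
      = Ω * ∑ r ∈ Finset.range (k + 2), th p (k + 1) r * Ω ^ (k + 1 - r) * s ^ r := by
    rw [Finset.sum_range_succ, if_neg (by omega), Finset.mul_sum]
    rw [zero_mul, zero_mul, add_zero]
    refine Finset.sum_congr rfl fun r hr => ?_
    have hrk : r ≤ k + 1 := by have := Finset.mem_range.mp hr; omega
    rw [if_pos hrk, show k + 2 - r = (k + 1 - r) + 1 from by omega, pow_succ]
    ring
  have e2 : (∑ r ∈ Finset.range (k + 3), (if 1 ≤ r then th p (k + 1) (r - 1) else 0) * Ω ^ (k + 2 - r) * s ^ r * p)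
      = (p * s) * ∑ r ∈ Finset.range (k + 2), th p (k + 1) r * Ω ^ (k + 1 - r) * s ^ r := by
    rw [Finset.sum_range_succ', Finset.mul_sum]
    rw [if_neg (by omega), zero_mul, zero_mul, zero_mul, add_zero]
    refine Finset.sum_congr rfl fun r hr => ?_
    rw [if_pos (by omega : 1 ≤ r + 1), show r + 1 - 1 = r from by omega,
        show k + 2 - (r + 1) = k + 1 - r from by omega, pow_succ]
    ring
  have e3 : (∑ r ∈ Finset.range (k + 3), (if 2 ≤ r then th p k (r - 2) else 0) * Ω ^ (k + 2 - r) * s ^ r)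
      = s ^ 2 * ∑ r ∈ Finset.range (k + 1), th p k r * Ω ^ (k - r) * s ^ r := by
    rw [Finset.sum_range_succ', if_neg (by omega), zero_mul, zero_mul, add_zero]
    rw [Finset.sum_range_succ', if_neg (by omega), zero_mul, zero_mul, add_zero]
    rw [Finset.mul_sum]
    refine Finset.sum_congr rfl fun r hr => ?_
    rw [if_pos (by omega : 2 ≤ r + 1 + 1), show r + 1 + 1 - 2 = r from by omega,
        show k + 2 - (r + 1 + 1) = k - r from by omega, show r + 1 + 1 = r + 2 from by omega, pow_add]
    ring
  rw [e1, e2, e3]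
  ring

lemma key (p Ω x y : ℝ) (h : x ^ 2 + y ^ 2 = Ω + p * (x * y)) (k : ℕ) (hk : 1 ≤ k) :
    x ^ (2 * k) + y ^ (2 * k) =
      ∑ r ∈ Finset.range (k + 1), th p k r * Ω ^ (k - r) * (x * y) ^ r := by
  have h10 : th p 1 0 = 1 := by
    norm_num [th, Nat.factorial]
  have h11 : th p 1 1 = p := by
    norm_num [th, Nat.factorial]
  have h20 : th p 2 0 = 1 := by
    norm_num [th, Nat.factorial]
  have h21 : th p 2 1 = 2 * p := by
    norm_num [th, Nat.factorial]
  have h22 : th p 2 2 = p ^ 2 - 2 := by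
    norm_num [th, Finset.sum_range_succ, Nat.factorial]
    ring
  have base1 : x ^ (2 * 1) + y ^ (2 * 1)
      = ∑ r ∈ Finset.range 2, th p 1 r * Ω ^ (1 - r) * (x * y) ^ r := by
    rw [Finset.sum_range_succ, Finset.sum_range_one, h10, h11]
    norm_num
    linear_combination h
  have base2 : x ^ (2 * 2) + y ^ (2 * 2)
      = ∑ r ∈ Finset.range 3, th p 2 r * Ω ^ (2 - r) * (x * y) ^ r := by
    rw [Finset.sum_range_succ, Finset.sum_range_succ, Finset.sum_range_one, h20, h21, h22]
    norm_num
    linear_combination (x ^ 2 + y ^ 2 + Ω + p * (x * y)) * h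
  have main : ∀ m : ℕ,
      (x ^ (2 * (m + 1)) + y ^ (2 * (m + 1))
        = ∑ r ∈ Finset.range (m + 2), th p (m + 1) r * Ω ^ (m + 1 - r) * (x * y) ^ r)
      ∧ (x ^ (2 * (m + 2)) + y ^ (2 * (m + 2))
        = ∑ r ∈ Finset.range (m + 3), th p (m + 2) r * Ω ^ (m + 2 - r) * (x * y) ^ r) := by
    intro m
    induction m with
    | zero => exact ⟨base1, base2⟩
    | succ n ih =>
      refine ⟨ih.2, ?_⟩
      have hrec : x ^ (2 * (n + 3)) + y ^ (2 * (n + 3))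
          = (Ω + p * (x * y)) * (x ^ (2 * (n + 2)) + y ^ (2 * (n + 2)))
            - (x * y) ^ 2 * (x ^ (2 * (n + 1)) + y ^ (2 * (n + 1))) := by
        rw [← h]; ring
      have hg := Gsum p Ω (x * y) (n + 1) (by omega)
      calc x ^ (2 * (n + 1 + 2)) + y ^ (2 * (n + 1 + 2))
          = x ^ (2 * (n + 3)) + y ^ (2 * (n + 3)) := by norm_num
        _ = (Ω + p * (x * y)) * (x ^ (2 * (n + 2)) + y ^ (2 * (n + 2)))
            - (x * y) ^ 2 * (x ^ (2 * (n + 1)) + y ^ (2 * (n + 1))) := hrec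
        _ = (Ω + p * (x * y)) * (∑ r ∈ Finset.range (n + 3), th p (n + 2) r * Ω ^ (n + 2 - r) * (x * y) ^ r)
            - (x * y) ^ 2 * (∑ r ∈ Finset.range (n + 2), th p (n + 1) r * Ω ^ (n + 1 - r) * (x * y) ^ r) := by
            rw [ih.1, ih.2]
        _ = ∑ r ∈ Finset.range (n + 1 + 3), th p (n + 1 + 2) r * Ω ^ (n + 1 + 2 - r) * (x * y) ^ r := by
            rw [hg]
  obtain ⟨m, rfl⟩ : ∃ m, k = m + 1 := ⟨k - 1, by omega⟩
  exact (main m).1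

/-- The `m = 1` case of the main identity, with
`θ_{k,r}(1) = Σ_{0 ≤ 2j ≤ r} (−1)ʲ k(k−1−j).factorial/((k−r).factorial j! (r−2j).factorial) p^{r−2j}`. -/
theorem stmt_5 (p a b : ℝ) (U V W : ℕ → ℝ)
    (hU0 : U 0 = 0) (hU1 : U 1 = 1)
    (hUrec : ∀ n, U (n + 2) = p * U (n + 1) - U n)
    (hV0 : V 0 = 2) (hV1 : V 1 = p)
    (hVrec : ∀ n, V (n + 2) = p * V (n + 1) - V n)
    (hW : ∀ n, W n = a * U n + b * V n)
    (Ω : ℝ) (hΩ : Ω = a ^ 2 + 4 * b ^ 2 - b ^ 2 * p ^ 2) :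
    ∀ (k : ℕ), 1 ≤ k → ∀ n : ℕ,
      W n ^ (2 * k) + W (n + 1) ^ (2 * k) =
        ∑ r ∈ Finset.range (k + 1),
          (∑ j ∈ Finset.range (r / 2 + 1),
            ((-1 : ℝ) ^ j * k * (k - 1 - j).factorial /
              ((k - r).factorial * j.factorial * (r - 2 * j).factorial)) * p ^ (r - 2 * j)) *
            Ω ^ (k - r) * W n ^ r * W (n + 1) ^ r := by
  have hWrec : ∀ n, W (n + 2) = p * W (n + 1) - W n := by
    intro n
    rw [hW, hW, hW, hUrec, hVrec]
    ring
  have hinv : ∀ n, W n ^ 2 + W (n + 1) ^ 2 = Ω + p * (W n * W (n + 1)) := by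
    intro n
    induction n with
    | zero =>
      rw [hW 0, hW 1, hU0, hU1, hV0, hV1, hΩ]
      ring
    | succ m ih =>
      have h2 : W (m + 1 + 1) = p * W (m + 1) - W m := hWrec m
      rw [h2]
      linear_combination ih
  intro k hk n
  rw [key p Ω (W n) (W (n + 1)) (hinv n) k hk]
  refine Finset.sum_congr rfl fun r hr => ?_
  rw [th, mul_pow]
  ring
end

section
/- With W_n = a·U_n + b·V_n and Ω = a² + 4b² − b²p², the case m = 2 of the main identity holds: W_n^{2k} + W_{n+2}^{2k} = Σ_{r=0}^{k} θ_{k,r}(2) · Ω^{k−r} · W_n^r · W_{n+2}^r, where θ_{k,r}(2) = Σ_{0 ≤ 2j ≤ k, 2j ≤ r} (−1)^j · k·(k−j−1)! / (j!·(k−r)!·(r−2j)!) · (p²−2)^{r−2j} · p^{2k−2r}. -/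
/-!
The sequence `W` satisfies `W (n + 2) = p W (n + 1) - W n`, so `W (n + 1)² - p W (n + 1) W n + W n²`
does not depend on `n`; at `n = 0` it equals `Ω`. Hence `X = W n²` and `Y = W (n + 2)²` satisfy
`X + Y = (p² - 2) P + p² Ω` and `X Y = P²` with `P = W n W (n + 2)`. Waring's formula
`X^k + Y^k = Σ_j (-1)^j k/(k-j) C(k-j, j) (X + Y)^(k-2j) (X Y)^j`, where
`k/(k-j) C(k-j, j) = 2 C(k-j, j) - C(k-1-j, j)`, followed by the binomial expansion of
`(X + Y)^(k-2j)`, gives the identity, `θ_{k,r}(2)` being the coefficient of `Ω^(k-r) P^r`.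
-/

open Finset

section

variable {R : Type*} [CommRing R]

-- The truncated exponent `k - 2 * j` is harmless: the coefficient vanishes when `k < 2 * j`.
lemma cast_choose_mul_pow_sub_succ (s : R) (k j : ℕ) :
    ((k - j).choose j : R) * s ^ (k + 1 - 2 * j) =
      ((k - j).choose j : R) * (s * s ^ (k - 2 * j)) := by
  rcases le_or_gt (2 * j) k with h | h
  · rw [show k + 1 - 2 * j = k - 2 * j + 1 by omega, pow_succ']
  · simp [Nat.choose_eq_zero_of_lt (show k - j < j by omega)]

/-- The Dickson polynomial of the second kind:
`dicksonE (x + y) (x * y) k = Σ_{i ≤ k} xⁱ y^(k-i)`. -/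
def dicksonE (s q : R) (k : ℕ) : R :=
  ∑ j ∈ range (k + 1), (-1) ^ j * ((k - j).choose j : R) * s ^ (k - 2 * j) * q ^ j

lemma dicksonE_zero (s q : R) : dicksonE s q 0 = 1 := by simp [dicksonE]

lemma dicksonE_one (s q : R) : dicksonE s q 1 = s := by simp [dicksonE, sum_range_succ]

lemma dicksonE_add_two (s q : R) (k : ℕ) :
    dicksonE s q (k + 2) = s * dicksonE s q (k + 1) - q * dicksonE s q k := by
  have hterm : ∀ j ∈ range (k + 1),
      (-1) ^ (j + 1) * ((k + 2 - (j + 1)).choose (j + 1) : R) *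
          s ^ (k + 2 - 2 * (j + 1)) * q ^ (j + 1) =
        s * ((-1) ^ (j + 1) * ((k + 1 - (j + 1)).choose (j + 1) : R) *
            s ^ (k + 1 - 2 * (j + 1)) * q ^ (j + 1)) -
          q * ((-1) ^ j * ((k - j).choose j : R) * s ^ (k - 2 * j) * q ^ j) := by
    intro j hj
    have hjk : j ≤ k := Nat.lt_succ_iff.mp (mem_range.mp hj)
    have hshift := cast_choose_mul_pow_sub_succ s (k + 1) (j + 1)
    rw [Nat.add_sub_add_right, show k + 1 + 1 - 2 * (j + 1) = k - 2 * j by omega] at hshift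
    rw [show k + 2 - (j + 1) = k - j + 1 by omega, show k + 2 - 2 * (j + 1) = k - 2 * j by omega,
      Nat.add_sub_add_right, Nat.choose_succ_succ', Nat.cast_add]
    linear_combination (-1) ^ (j + 1) * q ^ (j + 1) * hshift
  rw [dicksonE, dicksonE, dicksonE, sum_range_succ', sum_range_succ, sum_range_succ' _ (k + 1),
    mul_add s, mul_sum, mul_sum, sum_congr rfl hterm, sum_sub_distrib]
  rw [show k + 2 - (k + 1 + 1) = 0 by omega, Nat.choose_zero_succ]
  simp only [Nat.cast_zero, Nat.cast_one, Nat.choose_zero_right, mul_zero, zero_mul, Nat.sub_zero,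
    pow_zero]
  ring

lemma pow_add_pow_eq_dicksonE (x y : R) (k : ℕ) :
    x ^ (k + 1) + y ^ (k + 1) =
      2 * dicksonE (x + y) (x * y) (k + 1) - (x + y) * dicksonE (x + y) (x * y) k := by
  induction k using Nat.twoStepInduction with
  | zero => rw [dicksonE_one, dicksonE_zero]; ring
  | one => rw [dicksonE_add_two, dicksonE_one, dicksonE_zero]; ring
  | more k ih₀ ih₁ =>
    linear_combination (x + y) * ih₁ - x * y * ih₀ - 2 * dicksonE_add_two (x + y) (x * y) (k + 1)
      + (x + y) * dicksonE_add_two (x + y) (x * y) k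

lemma pow_add_pow_eq_sum (x y : R) {k : ℕ} (hk : 1 ≤ k) :
    x ^ k + y ^ k = ∑ j ∈ range (k / 2 + 1),
      (-1) ^ j * (2 * ((k - j).choose j : R) - (k - 1 - j).choose j) *
        (x + y) ^ (k - 2 * j) * (x * y) ^ j := by
  obtain ⟨k, rfl⟩ := Nat.exists_eq_add_of_le' hk
  rw [pow_add_pow_eq_dicksonE, dicksonE, dicksonE,
    sum_subset (range_subset_range.mpr (show (k + 1) / 2 + 1 ≤ k + 2 by omega))]
  swap
  · intro j _ hj
    rw [mem_range] at hj
    rw [Nat.choose_eq_zero_of_lt (show k + 1 - j < j by omega),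
      Nat.choose_eq_zero_of_lt (show k + 1 - 1 - j < j by omega)]
    ring
  simp only [sum_range_succ _ (k + 1), Nat.sub_self, Nat.add_sub_cancel, Nat.choose_zero_succ,
    show k - (k + 1) = 0 by omega, Nat.cast_zero, mul_zero, zero_mul, sub_zero, add_zero]
  rw [mul_sum, mul_sum, ← sum_sub_distrib]
  refine sum_congr rfl fun j _ => ?_
  linear_combination (-1) ^ j * (x * y) ^ j * cast_choose_mul_pow_sub_succ (x + y) k j

lemma sum_mul_add_pow_mul_sq_pow (A B P : R) (c : ℕ → R) (k : ℕ) :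
    ∑ j ∈ range (k / 2 + 1), c j * (A * P + B) ^ (k - 2 * j) * (P ^ 2) ^ j =
      ∑ r ∈ range (k + 1), ∑ j ∈ range (r / 2 + 1),
        c j * (k - 2 * j).choose (r - 2 * j) * A ^ (r - 2 * j) * B ^ (k - r) * P ^ r := by
  have hexpand : ∀ j ∈ range (k / 2 + 1), c j * (A * P + B) ^ (k - 2 * j) * (P ^ 2) ^ j =
      ∑ r ∈ Ico (2 * j) (k + 1),
        c j * (k - 2 * j).choose (r - 2 * j) * A ^ (r - 2 * j) * B ^ (k - r) * P ^ r := by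
    intro j hj
    have hjk : 2 * j ≤ k := by rw [mem_range] at hj; omega
    rw [add_pow, mul_sum, sum_mul, sum_Ico_eq_sum_range,
      show k + 1 - 2 * j = k - 2 * j + 1 by omega]
    refine sum_congr rfl fun i _ => ?_
    rw [Nat.add_sub_cancel_left, show k - (2 * j + i) = k - 2 * j - i by omega, pow_add, pow_mul]
    ring
  rw [sum_congr rfl hexpand]
  exact sum_comm' fun j r => by simp only [mem_range, mem_Ico]; omega

end

open Nat in
lemma two_mul_choose_sub_choose_mul_choose {k r j : ℕ} (hk : 1 ≤ k) (hr : r ≤ k) (hj : 2 * j ≤ r) :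
    (2 * ((k - j).choose j : ℝ) - (k - 1 - j).choose j) * (k - 2 * j).choose (r - 2 * j) =
      k * (k - j - 1)! / (j ! * (k - r)! * (r - 2 * j)!) := by
  obtain ⟨c, hc⟩ : ∃ c, k - j = c + 1 := ⟨k - j - 1, by omega⟩
  rw [show k - 1 - j = c by omega, show k - j - 1 = c by omega, hc]
  have hpred : ((c.choose j : ℕ) : ℝ) * (c + 1) = (c + 1).choose j * (k - 2 * j : ℕ) := by
    exact_mod_cast show c.choose j * (c + 1) = (c + 1).choose j * (k - 2 * j) by
      rw [choose_mul_succ_eq, show c + 1 - j = k - 2 * j by omega]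
  have hsplit : ((c + 1).choose j : ℝ) * j ! * (k - 2 * j)! = (c + 1)! := by
    exact_mod_cast show (c + 1).choose j * j ! * (k - 2 * j)! = (c + 1)! by
      rw [show k - 2 * j = c + 1 - j by omega, choose_mul_factorial_mul_factorial (by omega)]
  have hsplit' : ((k - 2 * j).choose (r - 2 * j) : ℝ) * (r - 2 * j)! * (k - r)! = (k - 2 * j)! := by
    exact_mod_cast show (k - 2 * j).choose (r - 2 * j) * (r - 2 * j)! * (k - r)! = (k - 2 * j)! by
      rw [show k - r = k - 2 * j - (r - 2 * j) by omega,
        choose_mul_factorial_mul_factorial (by omega)]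
  have hfact : ((c + 1)! : ℝ) = (c + 1) * c ! := by push_cast [factorial_succ]; ring
  have hkc : (k : ℝ) = c + 1 + j := by exact_mod_cast show k = c + 1 + j by omega
  have hk2j : ((k - 2 * j : ℕ) : ℝ) = c + 1 - j := by
    rw [Nat.cast_sub (by omega), hkc]; push_cast; ring
  rw [eq_div_iff (by positivity)]
  apply mul_right_cancel₀ (show (c : ℝ) + 1 ≠ 0 by positivity)
  set C := ((c + 1).choose j : ℝ)
  set C₂ := ((k - 2 * j).choose (r - 2 * j) : ℝ)
  set D := (j ! * (k - r)! * (r - 2 * j)! : ℝ)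
  linear_combination -C₂ * D * hpred - C * C₂ * D * hk2j - C * C₂ * D * hkc
    + C * k * j ! * hsplit' + k * hsplit + k * hfact

section

variable {R : Type*} [CommRing R] {p : R} {W : ℕ → R}

lemma sq_sub_mul_add_sq_eq_of_rec (hW : ∀ n, W (n + 2) = p * W (n + 1) - W n) (n : ℕ) :
    W (n + 1) ^ 2 - p * W (n + 1) * W n + W n ^ 2 = W 1 ^ 2 - p * W 1 * W 0 + W 0 ^ 2 := by
  induction n with
  | zero => rfl
  | succ n ih => rw [hW]; linear_combination ih

lemma sq_add_sq_eq_of_rec (hW : ∀ n, W (n + 2) = p * W (n + 1) - W n) (n : ℕ) :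
    W n ^ 2 + W (n + 2) ^ 2 =
      (p ^ 2 - 2) * (W n * W (n + 2)) + p ^ 2 * (W 1 ^ 2 - p * W 1 * W 0 + W 0 ^ 2) := by
  rw [← sq_sub_mul_add_sq_eq_of_rec hW n, hW]
  ring

end

/-- The `m = 2` case of the main identity, with
`θ_{k,r}(2) = Σ_{0 ≤ 2j ≤ r} (−1)ʲ k(k−j−1).factorial/(j!(k−r).factorial(r−2j).factorial) (p²−2)^{r−2j} p^{2k−2r}`. -/
theorem stmt_6 (p a b : ℝ) (U V W : ℕ → ℝ)
    (hU0 : U 0 = 0) (hU1 : U 1 = 1)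
    (hUrec : ∀ n, U (n + 2) = p * U (n + 1) - U n)
    (hV0 : V 0 = 2) (hV1 : V 1 = p)
    (hVrec : ∀ n, V (n + 2) = p * V (n + 1) - V n)
    (hW : ∀ n, W n = a * U n + b * V n)
    (Ω : ℝ) (hΩ : Ω = a ^ 2 + 4 * b ^ 2 - b ^ 2 * p ^ 2) :
    ∀ (k : ℕ), 1 ≤ k → ∀ n : ℕ,
      W n ^ (2 * k) + W (n + 2) ^ (2 * k) =
        ∑ r ∈ Finset.range (k + 1),
          (∑ j ∈ Finset.range (r / 2 + 1),
            ((-1 : ℝ) ^ j * k * (k - j - 1).factorial /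
              (j.factorial * (k - r).factorial * (r - 2 * j).factorial)) *
              (p ^ 2 - 2) ^ (r - 2 * j) * p ^ (2 * k - 2 * r)) *
            Ω ^ (k - r) * W n ^ r * W (n + 2) ^ r := by
  intro k hk n
  have hWrec : ∀ n, W (n + 2) = p * W (n + 1) - W n := fun n => by
    rw [hW, hW, hW, hUrec, hVrec]; ring
  have hsq : W n ^ 2 + W (n + 2) ^ 2 = (p ^ 2 - 2) * (W n * W (n + 2)) + p ^ 2 * Ω := by
    rw [sq_add_sq_eq_of_rec hWrec, hW 0, hW 1, hU0, hU1, hV0, hV1, hΩ]; ring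
  rw [pow_mul, pow_mul, pow_add_pow_eq_sum _ _ hk, hsq, ← mul_pow, sum_mul_add_pow_mul_sq_pow]
  refine sum_congr rfl fun r hr => ?_
  rw [sum_mul, sum_mul, sum_mul]
  refine sum_congr rfl fun j hj => ?_
  rw [mem_range] at hr hj
  rw [mul_assoc ((-1 : ℝ) ^ j), two_mul_choose_sub_choose_mul_choose hk (by omega) (by omega),
    mul_pow (p ^ 2), ← pow_mul, mul_pow (W n), show 2 * (k - r) = 2 * k - 2 * r by omega]
  ring
end

section
/- For integers k ≥ 1 and 0 ≤ j ≤ k with j ≤ 2(k−1) appropriately (i.e., so all factorials are of nonnegative integers), Σ_{i=0}^{⌊j/2⌋} (−1)^i · (k−i−1)!·2^{j−2i} / ((j−2i)!·i!) = (k−⌊j/2⌋−1)!/j! · 2^{⌈j/2⌉} · ∏_{i=0}^{⌊j/2⌋−1} (2k − 2⌈j/2⌉ − 1 − 2i). -/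
open Finset

/-!
Write `k = d + n + 1` and `j = 2n + r` with `r ∈ {0, 1}`, and reverse the order of summation.
Both sides then satisfy the same pair of recurrences in `n`, one for `r = 0` and one for `r = 1`,
which determine them from their common value `d! 2 ^ r / r!` at `n = 0`. On the sum side the
recurrences come from splitting the weight `2n + 2 + r` of the `i`-th term as `(r + 2i) + (2n + 2 - 2i)`:
each part lowers a factorial in the denominator.
-/

noncomputable def altTerm (d n r i : ℕ) : ℝ :=
  (-1 : ℝ) ^ (n - i) * (d + i).factorial * 2 ^ (r + 2 * i) /
    ((r + 2 * i).factorial * (n - i).factorial)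

noncomputable def altSum (d n r : ℕ) : ℝ := ∑ i ∈ range (n + 1), altTerm d n r i

noncomputable def closedForm (d n r : ℕ) : ℝ :=
  (d.factorial : ℝ) / (2 * n + r).factorial * 2 ^ (n + r) *
    ∏ i ∈ range n, (2 * (d : ℝ) + 1 - 2 * r - 2 * i)

lemma altTerm_succ_of_le (d n r i : ℕ) (h : i ≤ n) :
    (2 * (n : ℝ) + 2 - 2 * i) * altTerm d (n + 1) r i = -2 * altTerm d n r i := by
  obtain ⟨m, rfl⟩ := Nat.exists_eq_add_of_le h
  rw [altTerm, altTerm, show i + m + 1 - i = m + 1 by omega, show i + m - i = m by omega,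
    pow_succ, Nat.factorial_succ]
  push_cast
  field_simp
  ring

lemma altTerm_zero_succ (d n i : ℕ) :
    (2 * (i : ℝ) + 2) * altTerm d (n + 1) 0 (i + 1) = 2 * altTerm (d + 1) n 1 i := by
  rw [altTerm, altTerm, show n + 1 - (i + 1) = n - i by omega, show d + (i + 1) = d + 1 + i by omega,
    show 0 + 2 * (i + 1) = 1 + 2 * i + 1 by omega, pow_succ, Nat.factorial_succ (1 + 2 * i)]
  push_cast
  field_simp
  ring

lemma altTerm_one (d n i : ℕ) : (2 * (i : ℝ) + 1) * altTerm d n 1 i = 2 * altTerm d n 0 i := by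
  rw [altTerm, altTerm, show 1 + 2 * i = 0 + 2 * i + 1 by omega, pow_succ,
    Nat.factorial_succ (0 + 2 * i)]
  push_cast
  field_simp
  ring

lemma altSum_succ (d n r : ℕ) :
    (2 * (n : ℝ) + 2 + r) * altSum d (n + 1) r =
      ∑ i ∈ range (n + 2), (r + 2 * (i : ℝ)) * altTerm d (n + 1) r i - 2 * altSum d n r := by
  have hlast : (2 * (n : ℝ) + 2 - 2 * ((n + 1 : ℕ) : ℝ)) = 0 := by push_cast; ring
  have hrest : ∑ i ∈ range (n + 2), (2 * (n : ℝ) + 2 - 2 * i) * altTerm d (n + 1) r i =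
      -2 * altSum d n r := by
    rw [sum_range_succ, hlast, zero_mul, add_zero, altSum, mul_sum]
    exact sum_congr rfl fun i hi => altTerm_succ_of_le d n r i (mem_range_succ_iff.mp hi)
  rw [altSum, mul_sum, sub_eq_add_neg, ← neg_mul, ← hrest, ← sum_add_distrib]
  exact sum_congr rfl fun i _ => by ring

lemma altSum_succ_zero (d n : ℕ) :
    (2 * (n : ℝ) + 2) * altSum d (n + 1) 0 = 2 * altSum (d + 1) n 1 - 2 * altSum d n 0 := by
  have h := altSum_succ d n 0
  rw [sum_range_succ'] at h
  simp only [Nat.cast_zero, zero_add, add_zero, mul_zero, zero_mul] at h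
  rw [h]
  congr 1
  rw [altSum, mul_sum]
  refine sum_congr rfl fun i _ => ?_
  rw [← altTerm_zero_succ]
  push_cast
  ring

lemma altSum_succ_one (d n : ℕ) :
    (2 * (n : ℝ) + 3) * altSum d (n + 1) 1 = 2 * altSum d (n + 1) 0 - 2 * altSum d n 1 := by
  have h := altSum_succ d n 1
  simp only [Nat.cast_one, add_comm (1 : ℝ) (2 * _), altTerm_one] at h
  rw [show (2 * (n : ℝ) + 3) = 2 * n + 2 + 1 by ring, h, ← mul_sum]
  rfl

lemma closedForm_succ_zero (d n : ℕ) :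
    (2 * (n : ℝ) + 2) * closedForm d (n + 1) 0 =
      2 * closedForm (d + 1) n 1 - 2 * closedForm d n 0 := by
  have hprod : ∏ i ∈ range n, (2 * ((d + 1 : ℕ) : ℝ) + 1 - 2 * ((1 : ℕ) : ℝ) - 2 * i) =
      ∏ i ∈ range n, (2 * (d : ℝ) + 1 - 2 * ((0 : ℕ) : ℝ) - 2 * i) :=
    prod_congr rfl fun i _ => by push_cast; ring
  rw [closedForm, closedForm, closedForm, prod_range_succ, hprod,
    show 2 * (n + 1) + 0 = 2 * n + 1 + 1 by ring, show 2 * n + 0 = 2 * n by ring,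
    Nat.factorial_succ (2 * n + 1), Nat.factorial_succ (2 * n), Nat.factorial_succ d]
  push_cast
  field_simp
  ring

lemma closedForm_succ_one (d n : ℕ) :
    (2 * (n : ℝ) + 3) * closedForm d (n + 1) 1 =
      2 * closedForm d (n + 1) 0 - 2 * closedForm d n 1 := by
  have hprod : ∏ i ∈ range n, (2 * (d : ℝ) + 1 - 2 * ((0 : ℕ) : ℝ) - 2 * ((i + 1 : ℕ) : ℝ)) =
      ∏ i ∈ range n, (2 * (d : ℝ) + 1 - 2 * ((1 : ℕ) : ℝ) - 2 * i) :=
    prod_congr rfl fun i _ => by push_cast; ring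
  rw [closedForm, closedForm, closedForm, prod_range_succ, prod_range_succ', hprod,
    show 2 * (n + 1) + 1 = 2 * n + 1 + 1 + 1 by ring, show 2 * (n + 1) + 0 = 2 * n + 1 + 1 by ring,
    Nat.factorial_succ (2 * n + 1 + 1), Nat.factorial_succ (2 * n + 1)]
  push_cast
  field_simp
  ring

theorem altSum_eq_closedForm (n : ℕ) :
    ∀ d, altSum d n 0 = closedForm d n 0 ∧ altSum d n 1 = closedForm d n 1 := by
  induction n with
  | zero => intro d; constructor <;> simp [altSum, altTerm, closedForm]
  | succ n ih =>
    intro d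
    have heven : altSum d (n + 1) 0 = closedForm d (n + 1) 0 := by
      have h := altSum_succ_zero d n
      rw [(ih (d + 1)).2, (ih d).1, ← closedForm_succ_zero] at h
      exact mul_left_cancel₀ (by positivity) h
    refine ⟨heven, ?_⟩
    have h := altSum_succ_one d n
    rw [heven, (ih d).2, ← closedForm_succ_one] at h
    exact mul_left_cancel₀ (by positivity) h

lemma sum_reflect_eq_altSum (d n r : ℕ) :
    ∑ i ∈ range (n + 1), (-1 : ℝ) ^ i * (d + n + 1 - i - 1).factorial *
        2 ^ (2 * n + r - 2 * i) / ((2 * n + r - 2 * i).factorial * i.factorial) =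
      altSum d n r := by
  rw [altSum, ← sum_range_reflect]
  refine sum_congr rfl fun i hi => ?_
  have hin : i ≤ n := mem_range_succ_iff.mp hi
  rw [altTerm, show n + 1 - 1 - i = n - i by omega, show d + n + 1 - (n - i) - 1 = d + i by omega,
    show 2 * n + r - 2 * (n - i) = r + 2 * i by omega]

/-- Lemma 3:
`Σ_{i=0}^{⌊j/2⌋} (−1)ⁱ (k−i−1).factorial 2^{j−2i}/((j−2i).factorial i!)
  = (k−⌊j/2⌋−1).factorial/j! · 2^{⌈j/2⌉} · ∏_{i=0}^{⌊j/2⌋−1} (2k − 2⌈j/2⌉ − 1 − 2i)`. -/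
theorem stmt_7 (k j : ℕ) (hk : 1 ≤ k) (hj : j ≤ k) :
    ∑ i ∈ Finset.range (j / 2 + 1),
        (-1 : ℝ) ^ i * (k - i - 1).factorial * 2 ^ (j - 2 * i) / ((j - 2 * i).factorial * i.factorial) =
      ((k - j / 2 - 1).factorial : ℝ) / j.factorial * 2 ^ ((j + 1) / 2) *
        ∏ i ∈ Finset.range (j / 2),
          (2 * (k : ℝ) - 2 * ((j + 1) / 2 : ℕ) - 1 - 2 * i) := by
  obtain ⟨n, r, d, hr, rfl, rfl⟩ : ∃ n r d, r < 2 ∧ j = 2 * n + r ∧ k = d + n + 1 :=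
    ⟨j / 2, j % 2, k - j / 2 - 1, by omega, by omega, by omega⟩
  rw [show (2 * n + r) / 2 = n by omega, show (2 * n + r + 1) / 2 = n + r by omega,
    show d + n + 1 - n - 1 = d by omega]
  have hprod : ∏ i ∈ range n, (2 * ((d + n + 1 : ℕ) : ℝ) - 2 * ((n + r : ℕ) : ℝ) - 1 - 2 * i) =
      ∏ i ∈ range n, (2 * (d : ℝ) + 1 - 2 * r - 2 * i) :=
    prod_congr rfl fun i _ => by push_cast; ring
  rw [sum_reflect_eq_altSum, hprod, ← closedForm]
  interval_cases r
  exacts [(altSum_eq_closedForm n d).1, (altSum_eq_closedForm n d).2]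
end

section
/- The Chu–Vandermonde identity: for a nonnegative integer n and parameters a, c (with c, c+1, …, c+n−1 all nonzero), Σ_{k=0}^{n} ((−n)_k · (a)_k) / ((c)_k · k!) = (c−a)_n / (c)_n. -/
open Finset

/-- The rising factorial (Pochhammer symbol) `(a)ₙ = a(a+1)⋯(a+n−1)`. -/
def risingFactorial (a : ℚ) : ℕ → ℚ
  | 0 => 1
  | n + 1 => risingFactorial a n * (a + n)

lemma rf_succ (a : ℚ) (n : ℕ) :
    risingFactorial a (n + 1) = risingFactorial a n * (a + n) := rfl

lemma rf_zero (a : ℚ) : risingFactorial a 0 = 1 := rfl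

lemma rf_succ' (a : ℚ) (n : ℕ) :
    risingFactorial a (n + 1) = a * risingFactorial (a + 1) n := by
  induction n with
  | zero => simp [risingFactorial]
  | succ m ih =>
    rw [rf_succ, ih, rf_succ]
    push_cast
    ring

lemma rf_add (a : ℚ) (k m : ℕ) :
    risingFactorial a (k + m) = risingFactorial a k * risingFactorial (a + k) m := by
  induction m with
  | zero => simp [risingFactorial]
  | succ m ih =>
    rw [← Nat.add_assoc, rf_succ, ih, rf_succ]
    push_cast
    ring

lemma rf_ne_zero (a : ℚ) (m : ℕ) (h : ∀ i : ℕ, i < m → a + i ≠ 0) :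
    risingFactorial a m ≠ 0 := by
  induction m with
  | zero => simp [risingFactorial]
  | succ m ih =>
    rw [rf_succ]
    exact mul_ne_zero (ih fun i hi => h i (Nat.lt_succ_of_lt hi)) (h m (Nat.lt_succ_self m))

lemma rf_neg_nat (n k : ℕ) (hk : k ≤ n) :
    risingFactorial (-(n : ℚ)) k = (-1) ^ k * k.factorial * n.choose k := by
  induction k with
  | zero => simp [risingFactorial]
  | succ k ih =>
    have hk' : k ≤ n := Nat.le_of_succ_le hk
    rw [rf_succ, ih hk']
    have h := Nat.choose_succ_right_eq n k
    have hnk : ((n - k : ℕ) : ℚ) = (n : ℚ) - k := by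
      have := Nat.cast_sub hk' (R := ℚ); exact this
    have hq : (n.choose (k + 1) : ℚ) * (k + 1) = n.choose k * ((n : ℚ) - k) := by
      have := congrArg (Nat.cast : ℕ → ℚ) h
      push_cast at this
      rw [hnk] at this
      exact_mod_cast this
    have hfac : ((k + 1).factorial : ℚ) = (k.factorial : ℚ) * (k + 1) := by
      rw [Nat.factorial_succ]; push_cast; ring
    rw [hfac]
    have : (-(n : ℚ) + k) = -((n : ℚ) - k) := by ring
    rw [this]
    rw [pow_succ]
    linear_combination ((-1:ℚ)^k * k.factorial) * hq

/-- Denominator-free Chu–Vandermonde. -/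
lemma key_s9 (n : ℕ) (a : ℚ) : ∀ c : ℚ,
    ∑ k ∈ Finset.range (n + 1), (-1) ^ k * (n.choose k : ℚ) * risingFactorial a k *
      risingFactorial (c + k) (n - k) = risingFactorial (c - a) n := by
  induction n with
  | zero => intro c; simp [risingFactorial]
  | succ n ih =>
    intro c
    set F : ℕ → ℚ := fun k => (-1) ^ k * ((n + 1).choose k : ℚ) * risingFactorial a k *
      risingFactorial (c + k) (n + 1 - k) with hF
    set G : ℕ → ℚ := fun k => (-1) ^ k * (n.choose k : ℚ) * risingFactorial a k *
      risingFactorial (c + k) (n + 1 - k) with hG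
    set A : ℕ → ℚ := fun k => (-1) ^ (k + 1) * (n.choose k : ℚ) * risingFactorial a (k + 1) *
      risingFactorial (c + (k + 1)) (n - k) with hA
    have hsplit : ∀ k ∈ Finset.range (n + 1), F (k + 1) = A k + G (k + 1) := by
      intro k _
      simp only [hF, hA, hG]
      have hch : (((n + 1).choose (k + 1) : ℕ) : ℚ) = (n.choose k : ℚ) + (n.choose (k + 1) : ℚ) := by
        rw [Nat.choose_succ_succ]; push_cast; ring
      have hsub : n + 1 - (k + 1) = n - k := by omega
      rw [hsub, hch]
      simp only [Nat.cast_add, Nat.cast_one]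
      ring
    have h1 : ∑ k ∈ Finset.range (n + 2), F k
        = ∑ k ∈ Finset.range (n + 1), F (k + 1) + F 0 := Finset.sum_range_succ' F (n + 1)
    have h2 : ∑ k ∈ Finset.range (n + 1), G (k + 1) + G 0
        = ∑ k ∈ Finset.range (n + 1), G k := by
      rw [← Finset.sum_range_succ' G (n + 1)]
      rw [Finset.sum_range_succ]
      have : G (n + 1) = 0 := by
        simp only [hG]
        rw [Nat.choose_succ_self]
        push_cast
        ring
      rw [this, add_zero]
    have hF0G0 : F 0 = G 0 := by simp [hF, hG]
    have hGA : ∀ k ∈ Finset.range (n + 1), A k + G k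
        = (c - a) * ((-1) ^ k * (n.choose k : ℚ) * risingFactorial a k *
            risingFactorial ((c + 1) + k) (n - k)) := by
      intro k hk
      have hkn : k ≤ n := Nat.lt_succ_iff.mp (Finset.mem_range.mp hk)
      simp only [hA, hG]
      have hsub : n + 1 - k = (n - k) + 1 := by omega
      rw [hsub, rf_succ' (c + k) (n - k), rf_succ a k]
      have e1 : (c + ((k : ℚ) + 1)) = (c + 1) + k := by ring
      have e2 : (c + (k : ℚ)) + 1 = (c + 1) + k := by ring
      rw [e1, e2]
      ring
    calc ∑ k ∈ Finset.range (n + 2), F k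
        = ∑ k ∈ Finset.range (n + 1), F (k + 1) + F 0 := h1
      _ = ∑ k ∈ Finset.range (n + 1), (A k + G (k + 1)) + G 0 := by
          rw [Finset.sum_congr rfl hsplit, hF0G0]
      _ = ∑ k ∈ Finset.range (n + 1), A k +
            (∑ k ∈ Finset.range (n + 1), G (k + 1) + G 0) := by
          rw [Finset.sum_add_distrib]; ring
      _ = ∑ k ∈ Finset.range (n + 1), A k + ∑ k ∈ Finset.range (n + 1), G k := by rw [h2]
      _ = ∑ k ∈ Finset.range (n + 1), (A k + G k) := by rw [Finset.sum_add_distrib]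
      _ = (c - a) * ∑ k ∈ Finset.range (n + 1), ((-1) ^ k * (n.choose k : ℚ) *
            risingFactorial a k * risingFactorial ((c + 1) + k) (n - k)) := by
          rw [Finset.sum_congr rfl hGA, Finset.mul_sum]
      _ = (c - a) * risingFactorial ((c + 1) - a) n := by rw [ih (c + 1)]
      _ = risingFactorial (c - a) (n + 1) := by
          rw [rf_succ' (c - a) n]
          congr 1
          ring

/-- The Chu–Vandermonde identity:
`Σ_{k=0}^{n} (−n)ₖ(a)ₖ/((c)ₖ k!) = (c−a)ₙ/(c)ₙ`,
assuming `c, c+1, …, c+n−1` are all nonzero. -/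
theorem stmt_9 (n : ℕ) (a c : ℚ) (hc : ∀ i : ℕ, i < n → c + i ≠ 0) :
    ∑ k ∈ Finset.range (n + 1),
        risingFactorial (-(n : ℚ)) k * risingFactorial a k /
          (risingFactorial c k * k.factorial) =
      risingFactorial (c - a) n / risingFactorial c n := by
  rw [← key_s9 n a c, Finset.sum_div]
  apply Finset.sum_congr rfl
  intro k hk
  have hkn : k ≤ n := Nat.lt_succ_iff.mp (Finset.mem_range.mp hk)
  have hck : risingFactorial c k ≠ 0 := rf_ne_zero c k fun i hi => hc i (lt_of_lt_of_le hi hkn)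
  have hcn : risingFactorial c n = risingFactorial c k * risingFactorial (c + k) (n - k) := by
    rw [← rf_add]
    congr 1
    omega
  have hct : risingFactorial (c + k) (n - k) ≠ 0 := by
    apply rf_ne_zero
    intro i hi
    have : (c + k) + i = c + ((k + i : ℕ) : ℚ) := by push_cast; ring
    rw [this]
    exact hc (k + i) (by omega)
  have hfk : (k.factorial : ℚ) ≠ 0 := Nat.cast_ne_zero.mpr (Nat.factorial_ne_zero k)
  rw [rf_neg_nat n k hkn, hcn]
  field_simp
end

section
/- Take k = 2 in the main theorem: with W_n = a·U_n + b·V_n and Ω = a² + 4b² − b²p², for all m, n ≥ 0, W_n⁴ + W_{n+m}⁴ = (V_m² − 2)·W_n²·W_{n+m}² + 2·U_m²·V_m·Ω·W_n·W_{n+m} + U_m⁴·Ω². -/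
/-- The `k = 2` case of the main theorem:
`Wₙ⁴ + W_{n+m}⁴ = (Vₘ²−2)Wₙ²W_{n+m}² + 2Uₘ²VₘΩWₙW_{n+m} + Uₘ⁴Ω²`. -/
theorem stmt_15 (p a b : ℝ) (U V W : ℕ → ℝ)
    (hU0 : U 0 = 0) (hU1 : U 1 = 1)
    (hUrec : ∀ n, U (n + 2) = p * U (n + 1) - U n)
    (hV0 : V 0 = 2) (hV1 : V 1 = p)
    (hVrec : ∀ n, V (n + 2) = p * V (n + 1) - V n)
    (hW : ∀ n, W n = a * U n + b * V n)
    (Ω : ℝ) (hΩ : Ω = a ^ 2 + 4 * b ^ 2 - b ^ 2 * p ^ 2) :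
    ∀ m n : ℕ,
      W n ^ 4 + W (n + m) ^ 4 =
        (V m ^ 2 - 2) * W n ^ 2 * W (n + m) ^ 2 +
          2 * U m ^ 2 * V m * Ω * W n * W (n + m) + U m ^ 4 * Ω ^ 2 := by
  -- W satisfies the same recurrence
  have hWrec : ∀ n, W (n + 2) = p * W (n + 1) - W n := by
    intro n
    rw [hW, hW, hW, hUrec, hVrec]; ring
  -- invariant for W
  have L1 : ∀ n, W (n + 1) ^ 2 - p * W n * W (n + 1) + W n ^ 2 = Ω := by
    intro n
    induction n with
    | zero =>
      rw [hW 0, hW 1, hU0, hU1, hV0, hV1, hΩ]; ring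
    | succ k ih =>
      rw [hWrec k]
      linear_combination ih
  -- invariant for U
  have L2 : ∀ m, U (m + 1) ^ 2 - p * U m * U (m + 1) + U m ^ 2 = 1 := by
    intro m
    induction m with
    | zero => rw [hU0, hU1]; ring
    | succ k ih =>
      rw [hUrec k]
      linear_combination ih
  -- addition formula
  have L3 : ∀ m n, W (n + (m + 1)) = U (m + 1) * W (n + 1) - U m * W n := by
    intro m
    induction m with
    | zero => intro n; rw [hU0, hU1]; ring
    | succ k ih =>
      intro n
      have h1 : n + (k + 1 + 1) = (n + 1) + (k + 1) := by omega
      rw [h1, ih (n + 1), hWrec n, hUrec k]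
      ring
  -- V in terms of U
  have L4 : ∀ m, V m = 2 * U (m + 1) - p * U m := by
    have key : ∀ m, V m = 2 * U (m + 1) - p * U m ∧
        V (m + 1) = 2 * U (m + 1 + 1) - p * U (m + 1) := by
      intro m
      induction m with
      | zero =>
        refine ⟨?_, ?_⟩
        · rw [hV0, hU1, hU0]; ring
        · rw [hV1, hUrec 0, hU0, hU1]; ring
      | succ k ih =>
        refine ⟨ih.2, ?_⟩
        show V (k + 2) = 2 * U (k + 3) - p * U (k + 2)
        have e3 : U (k + 3) = p * U (k + 2) - U (k + 1) := hUrec (k + 1)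
        have i2 : V (k + 1) = 2 * U (k + 2) - p * U (k + 1) := ih.2
        rw [hVrec k, i2, ih.1, e3, hUrec k]
        ring
    exact fun m => (key m).1
  -- key quadratic identity
  have K : ∀ m n, W (n + m) ^ 2 - V m * W n * W (n + m) + W n ^ 2 = U m ^ 2 * Ω := by
    intro m n
    match m with
    | 0 =>
      rw [hU0, hV0, Nat.add_zero]; ring
    | k + 1 =>
      rw [L3 k n, L4 (k + 1), hUrec k]
      linear_combination (U (k + 1)) ^ 2 * (L1 n) - (W n) ^ 2 * (L2 k)
  intro m n
  linear_combination (W n ^ 2 + W (n + m) ^ 2 + V m * W n * W (n + m) + U m ^ 2 * Ω) * K m n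
end
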